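/- arXiv:1312.3621 — 10 statements merged into one kernel-verified Lean document; each statement's English description precedes it below -/
import Mathlib

section
/- Let T ∈ ℂ^{N×N} be an orthogonal projector, T^⊥ = I − T, and let b be Hermitian with b = T^⊥ b T^⊥. For a pair of matrices (χ, χ') define Γ(χ,χ') = T^⊥(χ' + bχ) − Tχ and Γ°(χ,χ') = T^⊥χ + Tχ'. Then for all matrices ψ, ψ', φ, φ' ∈ ℂ^{N×N}: (Γ°(ψ,ψ'))ᴴ·Γ(φ,φ') − (Γ(ψ,ψ'))ᴴ·Γ°(φ,φ') = ψᴴφ' − ψ'ᴴφ. -/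
open Matrix

/-- The abstract boundary-triplet identity
`(Γ°(ψ,ψ'))ᴴ Γ(φ,φ') - (Γ(ψ,ψ'))ᴴ Γ°(φ,φ') = ψᴴ φ' - ψ'ᴴ φ`, where
`Γ(χ,χ') = T^⊥(χ' + bχ) - Tχ` and `Γ°(χ,χ') = T^⊥χ + Tχ'`. -/
theorem boundary_triplet_identity {N : ℕ} (hN : 1 ≤ N)
    (T b : Matrix (Fin N) (Fin N) ℂ)
    (hT : Tᴴ = T) (hT2 : T * T = T)
    (hb : bᴴ = b) (hbT : b = (1 - T) * b * (1 - T))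
    (ψ ψ' φ φ' : Matrix (Fin N) (Fin N) ℂ) :
    ((1 - T) * ψ + T * ψ')ᴴ * ((1 - T) * (φ' + b * φ) - T * φ)
      - ((1 - T) * (ψ' + b * ψ) - T * ψ)ᴴ * ((1 - T) * φ + T * φ')
      = ψᴴ * φ' - ψ'ᴴ * φ := by
  have hTb : T * b = 0 := by
    rw [hbT]; simp only [← mul_assoc, mul_sub, mul_one, hT2, sub_self, zero_mul]
  have hbT' : b * T = 0 := by
    rw [hbT]; simp only [mul_assoc, sub_mul, one_mul, hT2, sub_self, mul_zero]
  have h1 : ∀ x : Matrix (Fin N) (Fin N) ℂ, T * (b * x) = 0 := by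
    intro x; rw [← mul_assoc, hTb, zero_mul]
  have h2 : ∀ x : Matrix (Fin N) (Fin N) ℂ, b * (T * x) = 0 := by
    intro x; rw [← mul_assoc, hbT', zero_mul]
  have h3 : ∀ x : Matrix (Fin N) (Fin N) ℂ, T * (T * x) = T * x := by
    intro x; rw [← mul_assoc, hT2]
  simp only [conjTranspose_add, conjTranspose_sub, conjTranspose_mul,
    conjTranspose_one, hT, hb]
  simp only [sub_mul, mul_sub, add_mul, mul_add, one_mul, mul_one,
    mul_assoc, h1, h2, h3, hTb, hbT', mul_zero, zero_mul, sub_zero, zero_sub,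
    add_zero, zero_add]
  abel
end

section
/- Let T₋, T₊ be orthogonal projectors on ℂ^N and set E^DD = Ran T₋ ∩ Ran T₊, E^ND = Ker T₋ ∩ Ran T₊, E^DN = Ran T₋ ∩ Ker T₊, E^NN = Ker T₋ ∩ Ker T₊. Then there exist a unique integer k ≥ 0, unique angles 0 < γ₁ < γ₂ < ⋯ < γ_k < π/2, and unique subspaces E[1], …, E[k] of ℂ^N such that: ℂ^N is the orthogonal direct sum E^DD ⊕ E^ND ⊕ E^DN ⊕ E^NN ⊕ E[1] ⊕ ⋯ ⊕ E[k], and for every i = 1, …, k, setting E[i]₋ = E[i] ∩ Ran T₋ and E[i]₊ = E[i] ∩ Ran T₊, one has E[i] = E[i]₋ + E[i]₊, dim E[i]₋ = dim E[i]₊, ‖T₊ x‖ = cos γ_i · ‖x‖ for all x ∈ E[i]₋, and ‖T₋ y‖ = cos γ_i · ‖y‖ for all y ∈ E[i]₊. -/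
/-!
Let `A = T₋T₊T₋`, a positive contraction. For `c ∈ (0, 1)` its eigenspace `E₋(c) ⊆ Ran T₋` is
mapped injectively by `T₊` into the eigenspace `E₊(c) ⊆ Ran T₊` of `T₊T₋T₊` and back, so the two
have equal dimension, and `‖T₊ x‖² = c ‖x‖²` on `E₋(c)`. Hence `E₋(cos² γ) ⊕ E₊(cos² γ)` is a piece
at angle `γ`; the eigenvalue `1` of `A` gives `E^DD`, the eigenvalue `0` gives `E^DN` after applying
`T₋`, and the spectral theorem for `A` and for `T₊T₋T₊` shows that the pieces and the four corners
span `ℂ^N`.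

Conversely, in any such decomposition the pieces span the orthogonal complement `C^⊥` of the
corners, which both projectors preserve and which meets `Ran T₋ ∩ Ran T₊` trivially. By
modularity the `E[i]₋` then span `Ran T₋ ∩ C^⊥`, so `T₊` maps `E[i]₋` into `E[i]₊`, and the two norm
identities force `T₋T₊ x = cos² γᵢ x` on `E[i]₋`: each `E[i]₋` is the eigenspace `E₋(cos² γᵢ)`.
-/

open Submodule Set

noncomputable section

/-- A single "twisted" piece of the decomposition: `E = E₋ + E₊` with
`E₋ = E ∩ Ran T₋`, `E₊ = E ∩ Ran T₊` of equal dimension, at angle `γ`. -/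
def IsAngularPart {N : ℕ} (Tm Tp : EuclideanSpace ℂ (Fin N) →ₗ[ℂ] EuclideanSpace ℂ (Fin N))
    (γ : ℝ) (E : Submodule ℂ (EuclideanSpace ℂ (Fin N))) : Prop :=
  E ≠ ⊥ ∧
  E = (E ⊓ LinearMap.range Tm) ⊔ (E ⊓ LinearMap.range Tp) ∧
  Module.finrank ℂ (E ⊓ LinearMap.range Tm : Submodule ℂ (EuclideanSpace ℂ (Fin N))) =
    Module.finrank ℂ (E ⊓ LinearMap.range Tp : Submodule ℂ (EuclideanSpace ℂ (Fin N))) ∧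
  (∀ x ∈ E ⊓ LinearMap.range Tm, ‖Tp x‖ = Real.cos γ * ‖x‖) ∧
  (∀ y ∈ E ⊓ LinearMap.range Tp, ‖Tm y‖ = Real.cos γ * ‖y‖)

/-- The full orthogonal decomposition
`ℂ^N = E^DD ⊕ E^ND ⊕ E^DN ⊕ E^NN ⊕ E[1] ⊕ ⋯ ⊕ E[k]` associated with a pair of
orthogonal projectors `T₋, T₊`, with angles `0 < γ₁ < ⋯ < γ_k < π/2`. -/
def IsAngularDecomposition {N : ℕ}
    (Tm Tp : EuclideanSpace ℂ (Fin N) →ₗ[ℂ] EuclideanSpace ℂ (Fin N))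
    (k : ℕ) (γ : Fin k → ℝ) (E : Fin k → Submodule ℂ (EuclideanSpace ℂ (Fin N))) : Prop :=
  StrictMono γ ∧ (∀ i, 0 < γ i ∧ γ i < Real.pi / 2) ∧
  (LinearMap.range Tm ⊓ LinearMap.range Tp) ⊔ (LinearMap.ker Tm ⊓ LinearMap.range Tp) ⊔
      (LinearMap.range Tm ⊓ LinearMap.ker Tp) ⊔ (LinearMap.ker Tm ⊓ LinearMap.ker Tp) ⊔
      (⨆ i, E i) = ⊤ ∧
  (LinearMap.range Tm ⊓ LinearMap.range Tp).IsOrtho (LinearMap.ker Tm ⊓ LinearMap.range Tp) ∧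
  (LinearMap.range Tm ⊓ LinearMap.range Tp).IsOrtho (LinearMap.range Tm ⊓ LinearMap.ker Tp) ∧
  (LinearMap.range Tm ⊓ LinearMap.range Tp).IsOrtho (LinearMap.ker Tm ⊓ LinearMap.ker Tp) ∧
  (LinearMap.ker Tm ⊓ LinearMap.range Tp).IsOrtho (LinearMap.range Tm ⊓ LinearMap.ker Tp) ∧
  (LinearMap.ker Tm ⊓ LinearMap.range Tp).IsOrtho (LinearMap.ker Tm ⊓ LinearMap.ker Tp) ∧
  (LinearMap.range Tm ⊓ LinearMap.ker Tp).IsOrtho (LinearMap.ker Tm ⊓ LinearMap.ker Tp) ∧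
  (∀ i, (LinearMap.range Tm ⊓ LinearMap.range Tp).IsOrtho (E i) ∧
        (LinearMap.ker Tm ⊓ LinearMap.range Tp).IsOrtho (E i) ∧
        (LinearMap.range Tm ⊓ LinearMap.ker Tp).IsOrtho (E i) ∧
        (LinearMap.ker Tm ⊓ LinearMap.ker Tp).IsOrtho (E i)) ∧
  (∀ i j, i ≠ j → (E i).IsOrtho (E j)) ∧
  ∀ i, IsAngularPart Tm Tp (γ i) (E i)

open Module End Real
open scoped InnerProductSpace

theorem eq_of_le_of_le_sup_of_disjoint {L : Type*} [Lattice L] [OrderBot L] [IsModularLattice L]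
    {a b u w : L} (hau : a ≤ u) (hbw : b ≤ w) (huw : Disjoint u w) (hu : u ≤ a ⊔ b) : a = u := by
  refine le_antisymm hau (le_of_eq ?_)
  calc u = (a ⊔ b) ⊓ u := (inf_eq_right.mpr hu).symm
    _ = a ⊔ b ⊓ u := sup_inf_assoc_of_le b hau
    _ = a := by rw [(huw.mono_right hbw).symm.eq_bot, sup_bot_eq]

theorem bijOn_cos_sq : BijOn (fun γ => cos γ ^ 2) (Ioo 0 (π / 2)) (Ioo 0 1) := by
  have hcos : ∀ γ ∈ Ioo 0 (π / 2), cos γ ∈ Ioo 0 1 := fun γ hγ =>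
    ⟨cos_pos_of_mem_Ioo ⟨by linarith [hγ.1, pi_pos], hγ.2⟩, by
      simpa using strictAntiOn_cos ⟨le_rfl, pi_pos.le⟩ ⟨hγ.1.le, by linarith [hγ.2, pi_pos]⟩ hγ.1⟩
  refine ⟨fun γ hγ => ?_, fun γ hγ δ hδ h => ?_, fun c hc => ?_⟩
  · obtain ⟨h0, h1⟩ := hcos γ hγ
    exact ⟨by positivity, by nlinarith⟩
  · refine injOn_cos ⟨hγ.1.le, by linarith [hγ.2, pi_pos]⟩ ⟨hδ.1.le, by linarith [hδ.2, pi_pos]⟩ ?_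
    exact (sq_eq_sq₀ (hcos γ hγ).1.le (hcos δ hδ).1.le).mp h
  · have hs : sqrt c ∈ Ioo 0 1 := ⟨sqrt_pos.mpr hc.1, by simpa using sqrt_lt_sqrt hc.1.le hc.2⟩
    refine ⟨arccos (sqrt c), ⟨arccos_pos.mpr hs.2, arccos_lt_pi_div_two.mpr hs.1⟩, ?_⟩
    simp only [cos_arccos (by linarith [hs.1]) hs.2.le, sq_sqrt hc.1.le]

namespace Submodule

variable {𝕜 E : Type*} [RCLike 𝕜] [NormedAddCommGroup E] [InnerProductSpace 𝕜 E]

theorem IsOrtho.orthogonal_eq_of_sup_eq_top {U V : Submodule 𝕜 E} (h : U ⟂ V)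
    (hUV : U ⊔ V = ⊤) : Uᗮ = V := by
  calc Uᗮ = (V ⊔ U) ⊓ Uᗮ := by rw [sup_comm, hUV, top_inf_eq]
    _ = V ⊔ U ⊓ Uᗮ := sup_inf_assoc_of_le U h.symm.le
    _ = V := by rw [inf_orthogonal_eq_bot, sup_bot_eq]

theorem le_of_le_iSup_of_isOrtho {ι : Type*} {F : ι → Submodule 𝕜 E}
    (hF : Pairwise fun i j => F i ⟂ F j) {M : Submodule 𝕜 E} {i : ι} (hM : M ≤ ⨆ j, F j)
    (hMF : ∀ j ≠ i, M ⟂ F j) : M ≤ F i := by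
  set R := ⨆ (j) (_ : j ≠ i), F j
  have hiR : F i ⟂ R :=
    isOrtho_iSup_right.mpr fun j => isOrtho_iSup_right.mpr fun hj => hF hj.symm
  have hMR : M ⟂ R := isOrtho_iSup_right.mpr fun j => isOrtho_iSup_right.mpr (hMF j)
  calc M ≤ (F i ⊔ R) ⊓ Rᗮ := le_inf (hM.trans (iSup_split_single F i).le) hMR.le
    _ = F i := by rw [sup_inf_assoc_of_le R hiR.le, inf_orthogonal_eq_bot, sup_bot_eq]

end Submodule

namespace LinearMap.IsSymmetricProjection

variable {𝕜 E : Type*} [RCLike 𝕜] [NormedAddCommGroup E] [InnerProductSpace 𝕜 E]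
variable {P : E →ₗ[𝕜] E} (hP : P.IsSymmetricProjection)
include hP

theorem apply_apply (x : E) : P (P x) = P x :=
  LinearMap.congr_fun hP.isIdempotentElem.eq x

theorem mem_range_iff {x : E} : x ∈ LinearMap.range P ↔ P x = x :=
  LinearMap.IsIdempotentElem.mem_range_iff hP.isIdempotentElem

theorem orthogonal_range : (LinearMap.range P)ᗮ = LinearMap.ker P :=
  (LinearMap.IsIdempotentElem.isSymmetric_iff_orthogonal_range hP.isIdempotentElem).mp
    hP.isSymmetric

theorem isOrtho_range_ker : LinearMap.range P ⟂ LinearMap.ker P :=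
  (LinearMap.IsIdempotentElem.isSymmetric_iff_isOrtho_range_ker hP.isIdempotentElem).mp
    hP.isSymmetric

theorem inner_apply_self (x : E) : ⟪x, P x⟫_𝕜 = (‖P x‖ : 𝕜) ^ 2 := by
  rw [← inner_self_eq_norm_sq_to_K, hP.isSymmetric x (P x), hP.apply_apply]

theorem norm_sq_eq_norm_sq_apply_add (x : E) : ‖x‖ ^ 2 = ‖P x‖ ^ 2 + ‖x - P x‖ ^ 2 := by
  have h : RCLike.re ⟪x, P x⟫_𝕜 = ‖P x‖ ^ 2 := by
    rw [hP.inner_apply_self]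
    norm_cast
  rw [@norm_sub_sq 𝕜, h]
  ring

theorem norm_apply_le (x : E) : ‖P x‖ ≤ ‖x‖ :=
  (sq_le_sq₀ (norm_nonneg _) (norm_nonneg _)).mp <| by
    rw [hP.norm_sq_eq_norm_sq_apply_add x]
    exact le_add_of_nonneg_right (sq_nonneg _)

theorem apply_eq_self_of_norm_eq {x : E} (h : ‖P x‖ = ‖x‖) : P x = x := by
  have hx := hP.norm_sq_eq_norm_sq_apply_add x
  rw [h, left_eq_add, sq_eq_zero_iff, norm_eq_zero, sub_eq_zero] at hx
  exact hx.symm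

end LinearMap.IsSymmetricProjection

namespace ProjectionPair

variable {𝕜 E : Type*} [RCLike 𝕜] [NormedAddCommGroup E] [InnerProductSpace 𝕜 E]
variable {P Q : E →ₗ[𝕜] E} {c c' γ δ : ℝ} {x : E}

/-- With `P = T₋`, `Q = T₊` and `c = cos² γᵢ` this is `E[i]₋`. -/
def sandwichEigenspace (P Q : E →ₗ[𝕜] E) (c : ℝ) : Submodule 𝕜 E :=
  eigenspace (P ∘ₗ Q ∘ₗ P) (c : 𝕜)

theorem mem_sandwichEigenspace_iff :
    x ∈ sandwichEigenspace P Q c ↔ P (Q (P x)) = (c : 𝕜) • x :=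
  mem_eigenspace_iff

theorem isSymmetric_sandwich (hP : P.IsSymmetric) (hQ : Q.IsSymmetric) :
    (P ∘ₗ Q ∘ₗ P).IsSymmetric := fun x y => by
  simp only [LinearMap.comp_apply]
  rw [hP, hQ, hP]

theorem isOrtho_sandwichEigenspace (hP : P.IsSymmetric) (hQ : Q.IsSymmetric) (h : c ≠ c') :
    sandwichEigenspace P Q c ⟂ sandwichEigenspace P Q c' :=
  (isSymmetric_sandwich hP hQ).orthogonalFamily_eigenspaces.isOrtho (by exact_mod_cast h)

theorem sandwichEigenspace_le_range (hc : c ≠ 0) :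
    sandwichEigenspace P Q c ≤ LinearMap.range P := fun x hx => by
  have hc' : (c : 𝕜) ≠ 0 := by exact_mod_cast hc
  rw [← inv_smul_smul₀ hc' x, ← mem_sandwichEigenspace_iff.mp hx]
  exact Submodule.smul_mem _ _ (LinearMap.mem_range_self _ _)

theorem finite_setOf_sandwichEigenspace_ne_bot [FiniteDimensional 𝕜 E] (P Q : E →ₗ[𝕜] E) :
    {c : ℝ | sandwichEigenspace P Q c ≠ ⊥}.Finite :=
  (finite_hasEigenvalue (P ∘ₗ Q ∘ₗ P)).preimage RCLike.ofReal_injective.injOn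

/-- `E^DD ⊔ E^ND ⊔ E^DN ⊔ E^NN`, with `P = T₋` and `Q = T₊`. -/
def corners (P Q : E →ₗ[𝕜] E) : Submodule 𝕜 E :=
  LinearMap.range P ⊓ LinearMap.range Q ⊔ LinearMap.ker P ⊓ LinearMap.range Q ⊔
    LinearMap.range P ⊓ LinearMap.ker Q ⊔ LinearMap.ker P ⊓ LinearMap.ker Q

theorem corners_comm : corners Q P = corners P Q := by
  simp only [corners, inf_comm (LinearMap.range Q), inf_comm (LinearMap.ker Q)]
  ac_rfl

def anglePart (P Q : E →ₗ[𝕜] E) (γ : ℝ) : Submodule 𝕜 E :=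
  sandwichEigenspace P Q (cos γ ^ 2) ⊔ sandwichEigenspace Q P (cos γ ^ 2)

theorem anglePart_comm : anglePart Q P γ = anglePart P Q γ :=
  sup_comm _ _

def angles (P Q : E →ₗ[𝕜] E) : Set ℝ :=
  {γ | γ ∈ Ioo 0 (π / 2) ∧ anglePart P Q γ ≠ ⊥}

theorem angles_comm : angles Q P = angles P Q := by
  simp only [angles, anglePart_comm]

theorem angles_finite [FiniteDimensional 𝕜 E] (P Q : E →ₗ[𝕜] E) : (angles P Q).Finite := by
  refine Set.Finite.of_finite_image (f := fun γ => cos γ ^ 2) (Set.Finite.subset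
    ((finite_setOf_sandwichEigenspace_ne_bot P Q).union
      (finite_setOf_sandwichEigenspace_ne_bot Q P)) ?_)
    (bijOn_cos_sq.injOn.mono fun γ hγ => hγ.1)
  rintro _ ⟨γ, ⟨-, hγ⟩, rfl⟩
  by_contra h
  simp only [mem_union, mem_ofPred_eq, not_or, not_not] at h
  exact hγ (sup_eq_bot_iff.mpr h)

variable (hP : P.IsSymmetricProjection) (hQ : Q.IsSymmetricProjection)
include hP

theorem apply_eq_self_of_mem_sandwichEigenspace (hc : c ≠ 0)
    (hx : x ∈ sandwichEigenspace P Q c) : P x = x :=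
  hP.mem_range_iff.mp (sandwichEigenspace_le_range hc hx)

theorem range_inf_ker_le_sandwichEigenspace_zero :
    LinearMap.range P ⊓ LinearMap.ker Q ≤ sandwichEigenspace P Q 0 := by
  rintro x ⟨hxP, hxQ⟩
  rw [mem_sandwichEigenspace_iff, hP.mem_range_iff.mp hxP, LinearMap.mem_ker.mp hxQ]
  simp

include hQ

theorem map_swap_le_sandwichEigenspace (hc : c ≠ 0) :
    (sandwichEigenspace P Q c).map Q ≤ sandwichEigenspace Q P c := by
  rintro _ ⟨x, hx, rfl⟩
  have hPx := apply_eq_self_of_mem_sandwichEigenspace hP hc hx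
  have hPQx : P (Q x) = (c : 𝕜) • x := by simpa [hPx] using mem_sandwichEigenspace_iff.mp hx
  rw [mem_sandwichEigenspace_iff, hQ.apply_apply, hPQx, map_smul]

theorem norm_sq_apply_apply_of_mem (hx : x ∈ sandwichEigenspace P Q c) :
    ‖Q (P x)‖ ^ 2 = c * ‖x‖ ^ 2 := by
  have h : ((‖Q (P x)‖ ^ 2 : ℝ) : 𝕜) = ((c * ‖x‖ ^ 2 : ℝ) : 𝕜) := by
    rw [RCLike.ofReal_pow, ← hQ.inner_apply_self, hP.isSymmetric,
      mem_sandwichEigenspace_iff.mp hx, inner_smul_right, inner_self_eq_norm_sq_to_K]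
    push_cast
    ring
  exact_mod_cast h

theorem norm_sq_apply_of_mem (hc : c ≠ 0) (hx : x ∈ sandwichEigenspace P Q c) :
    ‖Q x‖ ^ 2 = c * ‖x‖ ^ 2 := by
  rw [← norm_sq_apply_apply_of_mem hP hQ hx, apply_eq_self_of_mem_sandwichEigenspace hP hc hx]

theorem norm_apply_eq_cos_mul (hγ : 0 < cos γ) (hx : x ∈ sandwichEigenspace P Q (cos γ ^ 2)) :
    ‖Q x‖ = cos γ * ‖x‖ :=
  (sq_eq_sq₀ (norm_nonneg _) (by positivity)).mp <| by
    rw [norm_sq_apply_of_mem hP hQ (by positivity) hx, mul_pow]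

theorem mem_Icc_of_sandwichEigenspace_ne_bot (h : sandwichEigenspace P Q c ≠ ⊥) :
    c ∈ Icc 0 1 := by
  obtain ⟨x, hx, hx0⟩ := (Submodule.ne_bot_iff _).mp h
  have hn := norm_sq_apply_apply_of_mem hP hQ hx
  have hx0 : 0 < ‖x‖ := norm_pos_iff.mpr hx0
  have hle : ‖Q (P x)‖ ≤ ‖x‖ := (hQ.norm_apply_le _).trans (hP.norm_apply_le x)
  constructor <;> nlinarith [pow_pos hx0 2, mul_le_mul hle hle (norm_nonneg _) hx0.le]

theorem map_sandwichEigenspace_zero_le :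
    (sandwichEigenspace P Q 0).map P ≤ LinearMap.range P ⊓ LinearMap.ker Q := by
  rintro _ ⟨x, hx, rfl⟩
  have hn := norm_sq_apply_apply_of_mem hP hQ hx
  rw [zero_mul, sq_eq_zero_iff, norm_eq_zero] at hn
  exact ⟨LinearMap.mem_range_self P x, hn⟩

theorem sandwichEigenspace_one :
    sandwichEigenspace P Q 1 = LinearMap.range P ⊓ LinearMap.range Q := by
  refine le_antisymm (fun x hx => ?_) ?_
  · refine ⟨sandwichEigenspace_le_range one_ne_zero hx, ?_⟩
    have hn := norm_sq_apply_of_mem hP hQ one_ne_zero hx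
    rw [one_mul, sq_eq_sq₀ (norm_nonneg _) (norm_nonneg _)] at hn
    exact hQ.mem_range_iff.mpr (hQ.apply_eq_self_of_norm_eq hn)
  · rintro x ⟨hxP, hxQ⟩
    rw [mem_sandwichEigenspace_iff, hP.mem_range_iff.mp hxP, hQ.mem_range_iff.mp hxQ,
      hP.mem_range_iff.mp hxP]
    simp

theorem finrank_sandwichEigenspace_le_swap [FiniteDimensional 𝕜 E] (hc : c ≠ 0) :
    finrank 𝕜 (sandwichEigenspace P Q c) ≤ finrank 𝕜 (sandwichEigenspace Q P c) := by
  refine LinearMap.finrank_le_finrank_of_injective (f := Q.restrict fun x hx =>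
    map_swap_le_sandwichEigenspace hP hQ hc (Submodule.mem_map_of_mem hx))
    ((injective_iff_map_eq_zero _).mpr fun x hx => ?_)
  have hn := norm_sq_apply_of_mem hP hQ hc x.2
  rw [show Q x = 0 from congrArg Subtype.val hx, norm_zero] at hn
  simpa [hc] using hn

theorem isOrtho_sandwichEigenspace_swap (hc : c ≠ 0) (hc' : c' ≠ 0) (h : c ≠ c') :
    sandwichEigenspace P Q c ⟂ sandwichEigenspace Q P c' := by
  rw [isOrtho_iff_inner_eq]
  intro x hx y hy
  rw [← apply_eq_self_of_mem_sandwichEigenspace hP hc hx, hP.isSymmetric]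
  exact (isOrtho_sandwichEigenspace hP.isSymmetric hQ.isSymmetric h).inner_eq hx
    (map_swap_le_sandwichEigenspace hQ hP hc' (mem_map_of_mem hy))

theorem mem_sandwichEigenspace_of_norm_eq {a : ℝ} (hx : x ∈ LinearMap.range P)
    (hQx : ‖Q x‖ = a * ‖x‖) (hPQx : ‖P (Q x)‖ = a * ‖Q x‖) :
    x ∈ sandwichEigenspace P Q (a ^ 2) := by
  have hPx := hP.mem_range_iff.mp hx
  have hinner : ⟪P (Q x), ((a ^ 2 : ℝ) : 𝕜) • x⟫_𝕜 = ((a ^ 2 * ‖Q x‖ ^ 2 : ℝ) : 𝕜) := by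
    rw [inner_smul_right, hP.isSymmetric, hPx, hQ.isSymmetric, hQ.inner_apply_self]
    push_cast
    ring
  have h : ‖P (Q x) - ((a ^ 2 : ℝ) : 𝕜) • x‖ ^ 2 = 0 := by
    rw [@norm_sub_sq 𝕜, hinner, RCLike.ofReal_re, norm_smul, RCLike.norm_ofReal,
      abs_of_nonneg (by positivity), hPQx, hQx]
    ring
  rw [mem_sandwichEigenspace_iff, hPx]
  exact sub_eq_zero.mp (norm_eq_zero.mp (pow_eq_zero_iff two_ne_zero |>.mp h))

theorem corners_isOrtho_sandwichEigenspace (hc : c ∈ Ioo 0 1) :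
    corners P Q ⟂ sandwichEigenspace P Q c := by
  have hker : LinearMap.ker P ⟂ sandwichEigenspace P Q c :=
    hP.isOrtho_range_ker.symm.mono_right (sandwichEigenspace_le_range hc.1.ne')
  simp only [corners, isOrtho_sup_left]
  refine ⟨⟨⟨?_, hker.mono_left inf_le_left⟩, ?_⟩, hker.mono_left inf_le_left⟩
  · rw [← sandwichEigenspace_one hP hQ]
    exact isOrtho_sandwichEigenspace hP.isSymmetric hQ.isSymmetric hc.2.ne'
  · exact (isOrtho_sandwichEigenspace hP.isSymmetric hQ.isSymmetric hc.1.ne).mono_left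
      (range_inf_ker_le_sandwichEigenspace_zero hP)

theorem sandwichEigenspace_le_range_inf_orthogonal_corners (hc : c ∈ Ioo 0 1) :
    sandwichEigenspace P Q c ≤ LinearMap.range P ⊓ (corners P Q)ᗮ :=
  le_inf (sandwichEigenspace_le_range hc.1.ne')
    (corners_isOrtho_sandwichEigenspace hP hQ hc).symm.le

omit hP in
theorem orthogonal_corners_mem_invtSubmodule : (corners P Q)ᗮ ∈ invtSubmodule Q := by
  have hrange : ∀ S ≤ LinearMap.range Q, S ∈ invtSubmodule Q := fun S hS =>
    (mem_invtSubmodule_iff_forall_mem_of_mem Q).mpr fun x hx => by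
      rwa [hQ.mem_range_iff.mp (hS hx)]
  have hker : ∀ S ≤ LinearMap.ker Q, S ∈ invtSubmodule Q := fun S hS =>
    (mem_invtSubmodule_iff_forall_mem_of_mem Q).mpr fun x hx => by
      rw [LinearMap.mem_ker.mp (hS hx)]
      exact zero_mem S
  refine hQ.isSymmetric.orthogonalComplement_mem_invtSubmodule ?_
  exact invtSubmodule.sup_mem (invtSubmodule.sup_mem (invtSubmodule.sup_mem
    (hrange _ inf_le_right) (hrange _ inf_le_right)) (hker _ inf_le_right)) (hker _ inf_le_right)

theorem corners_isOrtho_anglePart (hγ : γ ∈ Ioo 0 (π / 2)) : corners P Q ⟂ anglePart P Q γ :=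
  isOrtho_sup_right.mpr ⟨corners_isOrtho_sandwichEigenspace hP hQ (bijOn_cos_sq.mapsTo hγ),
    corners_comm (P := P) ▸ corners_isOrtho_sandwichEigenspace hQ hP (bijOn_cos_sq.mapsTo hγ)⟩

theorem isOrtho_anglePart (hγ : γ ∈ Ioo 0 (π / 2)) (hδ : δ ∈ Ioo 0 (π / 2)) (h : γ ≠ δ) :
    anglePart P Q γ ⟂ anglePart P Q δ := by
  have hγ0 := (bijOn_cos_sq.mapsTo hγ).1.ne'
  have hδ0 := (bijOn_cos_sq.mapsTo hδ).1.ne'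
  have hne : cos γ ^ 2 ≠ cos δ ^ 2 := fun h' => h (bijOn_cos_sq.injOn hγ hδ h')
  unfold anglePart
  rw [isOrtho_sup_left, isOrtho_sup_right, isOrtho_sup_right]
  exact ⟨⟨isOrtho_sandwichEigenspace hP.isSymmetric hQ.isSymmetric hne,
      isOrtho_sandwichEigenspace_swap hP hQ hγ0 hδ0 hne⟩,
    isOrtho_sandwichEigenspace_swap hQ hP hγ0 hδ0 hne,
      isOrtho_sandwichEigenspace hQ.isSymmetric hP.isSymmetric hne⟩

theorem anglePart_inf_range (hγ : γ ∈ Ioo 0 (π / 2)) :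
    anglePart P Q γ ⊓ LinearMap.range P = sandwichEigenspace P Q (cos γ ^ 2) := by
  obtain ⟨hc0, hc1⟩ := bijOn_cos_sq.mapsTo hγ
  have hdisj : sandwichEigenspace Q P (cos γ ^ 2) ⊓ LinearMap.range P = ⊥ := by
    have h1 : sandwichEigenspace Q P (cos γ ^ 2) ⊓ LinearMap.range P ≤
        sandwichEigenspace Q P 1 := by
      rw [sandwichEigenspace_one hQ hP]
      exact inf_le_inf_right _ (sandwichEigenspace_le_range hc0.ne')
    exact eq_bot_iff.mpr ((le_inf inf_le_left h1).trans
      (isOrtho_sandwichEigenspace hQ.isSymmetric hP.isSymmetric hc1.ne).disjoint.le_bot)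
  rw [anglePart, sup_inf_assoc_of_le _ (sandwichEigenspace_le_range hc0.ne'), hdisj, sup_bot_eq]

theorem range_le_corners_sup_iSup_anglePart [FiniteDimensional 𝕜 E] :
    LinearMap.range P ≤ corners P Q ⊔ ⨆ γ ∈ angles P Q, anglePart P Q γ := by
  have hA := isSymmetric_sandwich hP.isSymmetric hQ.isSymmetric
  rw [← Submodule.map_top,
    ← orthogonal_eq_bot_iff.mp hA.orthogonalComplement_iSup_eigenspaces_eq_bot, Submodule.map_iSup]
  refine iSup_le fun μ => ?_
  rcases eq_or_ne (eigenspace (P ∘ₗ Q ∘ₗ P) μ) ⊥ with h | h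
  · rw [h, Submodule.map_bot]
    exact bot_le
  obtain ⟨c, rfl⟩ : ∃ c : ℝ, (c : 𝕜) = μ :=
    ⟨RCLike.re μ, RCLike.conj_eq_iff_re.mp (hA.conj_eigenvalue_eq_self h)⟩
  change sandwichEigenspace P Q c ≠ ⊥ at h
  change (sandwichEigenspace P Q c).map P ≤ _
  obtain ⟨hc0, hc1⟩ := mem_Icc_of_sandwichEigenspace_ne_bot hP hQ h
  rcases hc0.eq_or_lt with rfl | hc0
  · exact (map_sandwichEigenspace_zero_le hP hQ).trans
      (le_sup_of_le_left (le_sup_of_le_left le_sup_right))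
  have hmap : (sandwichEigenspace P Q c).map P ≤ sandwichEigenspace P Q c := by
    rintro _ ⟨x, hx, rfl⟩
    rwa [apply_eq_self_of_mem_sandwichEigenspace hP hc0.ne' hx]
  refine hmap.trans ?_
  rcases hc1.eq_or_lt with rfl | hc1
  · rw [sandwichEigenspace_one hP hQ]
    exact le_sup_of_le_left (le_sup_of_le_left (le_sup_of_le_left le_sup_left))
  obtain ⟨γ, hγ, rfl⟩ := bijOn_cos_sq.surjOn ⟨hc0, hc1⟩
  exact le_sup_of_le_right
    (le_iSup₂_of_le γ ⟨hγ, ne_bot_of_le_ne_bot h le_sup_left⟩ le_sup_left)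

theorem corners_sup_iSup_anglePart_eq_top [FiniteDimensional 𝕜 E] :
    corners P Q ⊔ ⨆ γ ∈ angles P Q, anglePart P Q γ = ⊤ := by
  set S := corners P Q ⊔ ⨆ γ ∈ angles P Q, anglePart P Q γ
  have hQS : LinearMap.range Q ≤ S := by
    simpa only [corners_comm, angles_comm, anglePart_comm] using
      range_le_corners_sup_iSup_anglePart hQ hP
  have hS : Sᗮ ≤ S := calc
    Sᗮ ≤ (LinearMap.range P)ᗮ ⊓ (LinearMap.range Q)ᗮ :=
      le_inf (orthogonal_le (range_le_corners_sup_iSup_anglePart hP hQ)) (orthogonal_le hQS)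
    _ = LinearMap.ker P ⊓ LinearMap.ker Q := by rw [hP.orthogonal_range, hQ.orthogonal_range]
    _ ≤ S := le_sup_of_le_left le_sup_right
  exact orthogonal_eq_bot_iff.mp
    (eq_bot_iff.mpr ((le_inf hS le_rfl).trans (inf_orthogonal_eq_bot S).le))

end ProjectionPair

open ProjectionPair

section EuclideanSpace

variable {N k : ℕ} {P Q : EuclideanSpace ℂ (Fin N) →ₗ[ℂ] EuclideanSpace ℂ (Fin N)}
  {γ : Fin k → ℝ} {E : Fin k → Submodule ℂ (EuclideanSpace ℂ (Fin N))}

theorem isAngularPart_anglePart (hP : P.IsSymmetricProjection) (hQ : Q.IsSymmetricProjection)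
    {δ : ℝ} (hδ : δ ∈ angles P Q) : IsAngularPart P Q δ (anglePart P Q δ) := by
  have hPside := anglePart_inf_range hP hQ hδ.1
  have hQside := anglePart_inf_range hQ hP hδ.1
  rw [anglePart_comm] at hQside
  have hc0 := (bijOn_cos_sq.mapsTo hδ.1).1.ne'
  have hcos : 0 < cos δ := cos_pos_of_mem_Ioo ⟨by linarith [hδ.1.1, pi_pos], hδ.1.2⟩
  refine ⟨hδ.2, by rw [hPside, hQside]; rfl, ?_, fun x hx => ?_, fun y hy => ?_⟩
  · rw [hPside, hQside]
    exact le_antisymm (finrank_sandwichEigenspace_le_swap hP hQ hc0)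
      (finrank_sandwichEigenspace_le_swap hQ hP hc0)
  · exact norm_apply_eq_cos_mul hP hQ hcos (hPside ▸ hx)
  · exact norm_apply_eq_cos_mul hQ hP hcos (hQside ▸ hy)

theorem isAngularDecomposition_of_range_eq_angles (hP : P.IsSymmetricProjection)
    (hQ : Q.IsSymmetricProjection) (hmono : StrictMono γ) (hrange : Set.range γ = angles P Q) :
    IsAngularDecomposition P Q k γ fun i => anglePart P Q (γ i) := by
  have hmem : ∀ i, γ i ∈ angles P Q := fun i => hrange ▸ mem_range_self i
  have htop := corners_sup_iSup_anglePart_eq_top hP hQ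
  rw [← hrange, iSup_range] at htop
  refine ⟨hmono, fun i => (hmem i).1, htop,
    hP.isOrtho_range_ker.mono inf_le_left inf_le_left,
    hQ.isOrtho_range_ker.mono inf_le_right inf_le_right,
    hP.isOrtho_range_ker.mono inf_le_left inf_le_left,
    hQ.isOrtho_range_ker.mono inf_le_right inf_le_right,
    hQ.isOrtho_range_ker.mono inf_le_right inf_le_right,
    hP.isOrtho_range_ker.mono inf_le_left inf_le_left, fun i => ?_,
    fun i j hij => isOrtho_anglePart hP hQ (hmem i).1 (hmem j).1 (hmono.injective.ne hij),
    fun i => isAngularPart_anglePart hP hQ (hmem i)⟩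
  have h := corners_isOrtho_anglePart hP hQ (hmem i).1
  simp only [corners, isOrtho_sup_left] at h
  exact ⟨h.1.1.1, h.1.1.2, h.1.2, h.2⟩

namespace IsAngularDecomposition

variable (hD : IsAngularDecomposition P Q k γ E)
include hD

theorem swap : IsAngularDecomposition Q P k γ E := by
  obtain ⟨hmono, hγ, htop, hDD_ND, hDD_DN, hDD_NN, hND_DN, hND_NN, hDN_NN, hcE, hEE, hpart⟩ := hD
  simp only [IsAngularDecomposition, IsAngularPart, inf_comm (LinearMap.range Q),
    inf_comm (LinearMap.ker Q)]
  refine ⟨hmono, hγ, ?_, hDD_DN, hDD_ND, hDD_NN, hND_DN.symm, hDN_NN, hND_NN, fun i => ?_, hEE,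
    fun i => ?_⟩
  · rwa [sup_right_comm (LinearMap.range P ⊓ LinearMap.range Q)
      (LinearMap.range P ⊓ LinearMap.ker Q)]
  · obtain ⟨h1, h2, h3, h4⟩ := hcE i
    exact ⟨h1, h3, h2, h4⟩
  · obtain ⟨hne, hsum, hrank, hnP, hnQ⟩ := hpart i
    exact ⟨hne, by rwa [sup_comm], hrank.symm, hnQ, hnP⟩

theorem mem_Ioo (i : Fin k) : γ i ∈ Ioo 0 (π / 2) :=
  hD.2.1 i

theorem pairwise_isOrtho : Pairwise fun i j => E i ⟂ E j := by
  obtain ⟨-, -, -, -, -, -, -, -, -, -, hEE, -⟩ := hD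
  exact fun i j h => hEE i j h

theorem isAngularPart (i : Fin k) : IsAngularPart P Q (γ i) (E i) := by
  obtain ⟨-, -, -, -, -, -, -, -, -, -, -, hpart⟩ := hD
  exact hpart i

theorem corners_isOrtho (i : Fin k) : corners P Q ⟂ E i := by
  obtain ⟨-, -, -, -, -, -, -, -, -, hcE, -, -⟩ := hD
  obtain ⟨h1, h2, h3, h4⟩ := hcE i
  exact isOrtho_sup_left.mpr ⟨isOrtho_sup_left.mpr ⟨isOrtho_sup_left.mpr ⟨h1, h2⟩, h3⟩, h4⟩

theorem orthogonal_corners : (corners P Q)ᗮ = ⨆ i, E i :=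
  (isOrtho_iSup_right.mpr hD.corners_isOrtho).orthogonal_eq_of_sup_eq_top hD.2.2.1

theorem iSup_inf_range :
    ⨆ i, E i ⊓ LinearMap.range P = LinearMap.range P ⊓ (corners P Q)ᗮ := by
  have hDD : LinearMap.range P ⊓ LinearMap.range Q ≤ corners P Q :=
    le_sup_of_le_left (le_sup_of_le_left le_sup_left)
  have hsum : (corners P Q)ᗮ =
      (⨆ i, E i ⊓ LinearMap.range P) ⊔ ⨆ i, E i ⊓ LinearMap.range Q := by
    rw [hD.orthogonal_corners, ← iSup_sup_eq]
    exact iSup_congr fun i => (hD.isAngularPart i).2.1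
  refine eq_of_le_of_le_sup_of_disjoint (w := LinearMap.range Q ⊓ (corners P Q)ᗮ)
    (iSup_le fun i => le_inf inf_le_right (inf_le_left.trans (hD.corners_isOrtho i).symm.le))
    (iSup_le fun i => le_inf inf_le_right (inf_le_left.trans (hD.corners_isOrtho i).symm.le))
    (disjoint_iff_inf_le.mpr fun x ⟨⟨hxP, hxC⟩, hxQ, _⟩ =>
      (inf_orthogonal_eq_bot (corners P Q)).le ⟨hDD ⟨hxP, hxQ⟩, hxC⟩)
    (inf_le_right.trans hsum.le)

theorem map_inf_range_le (hQ : Q.IsSymmetricProjection) (i : Fin k) :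
    (E i ⊓ LinearMap.range P).map Q ≤ E i ⊓ LinearMap.range Q := by
  refine le_of_le_iSup_of_isOrtho (F := fun j => E j ⊓ LinearMap.range Q)
    (fun j l h => (hD.pairwise_isOrtho h).mono inf_le_left inf_le_left) ?_ fun j hj => ?_
  · rw [hD.swap.iSup_inf_range, corners_comm]
    rintro _ ⟨x, ⟨hxE, -⟩, rfl⟩
    exact ⟨LinearMap.mem_range_self Q x, (mem_invtSubmodule_iff_forall_mem_of_mem Q).mp
      (orthogonal_corners_mem_invtSubmodule hQ) x ((hD.corners_isOrtho i).symm.le hxE)⟩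
  · rw [isOrtho_iff_inner_eq]
    rintro _ ⟨x, ⟨hxE, -⟩, rfl⟩ y ⟨hyE, hyQ⟩
    rw [hQ.isSymmetric, hQ.mem_range_iff.mp hyQ]
    exact (hD.pairwise_isOrtho hj.symm).inner_eq hxE hyE

theorem inf_range_le_sandwichEigenspace (hP : P.IsSymmetricProjection)
    (hQ : Q.IsSymmetricProjection) (i : Fin k) :
    E i ⊓ LinearMap.range P ≤ sandwichEigenspace P Q (cos (γ i) ^ 2) := fun x hx => by
  obtain ⟨-, -, -, hnP, hnQ⟩ := hD.isAngularPart i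
  exact mem_sandwichEigenspace_of_norm_eq hP hQ hx.2 (hnP x hx)
    (hnQ _ (hD.map_inf_range_le hQ i (mem_map_of_mem hx)))

theorem inf_range_eq (hP : P.IsSymmetricProjection) (hQ : Q.IsSymmetricProjection) (i : Fin k) :
    E i ⊓ LinearMap.range P = sandwichEigenspace P Q (cos (γ i) ^ 2) := by
  refine le_antisymm (hD.inf_range_le_sandwichEigenspace hP hQ i) ?_
  refine le_of_le_iSup_of_isOrtho (F := fun j => E j ⊓ LinearMap.range P)
    (fun j l h => (hD.pairwise_isOrtho h).mono inf_le_left inf_le_left) ?_ fun j hj => ?_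
  · rw [hD.iSup_inf_range]
    exact sandwichEigenspace_le_range_inf_orthogonal_corners hP hQ
      (bijOn_cos_sq.mapsTo (hD.mem_Ioo i))
  · refine (isOrtho_sandwichEigenspace hP.isSymmetric hQ.isSymmetric fun h => hj ?_).mono_right
      (hD.inf_range_le_sandwichEigenspace hP hQ j)
    exact (hD.1.injective (bijOn_cos_sq.injOn (hD.mem_Ioo i) (hD.mem_Ioo j) h)).symm

theorem exists_cos_sq_eq (hP : P.IsSymmetricProjection) (hQ : Q.IsSymmetricProjection) {c : ℝ}
    (hc : c ∈ Ioo 0 1) (hne : sandwichEigenspace P Q c ≠ ⊥) : ∃ i, cos (γ i) ^ 2 = c := by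
  by_contra! h
  have hle : sandwichEigenspace P Q c ≤ ⨆ j, E j ⊓ LinearMap.range P :=
    hD.iSup_inf_range ▸ sandwichEigenspace_le_range_inf_orthogonal_corners hP hQ hc
  have hperp : sandwichEigenspace P Q c ⟂ ⨆ j, E j ⊓ LinearMap.range P :=
    isOrtho_iSup_right.mpr fun j =>
      (isOrtho_sandwichEigenspace hP.isSymmetric hQ.isSymmetric (h j).symm).mono_right
        (hD.inf_range_le_sandwichEigenspace hP hQ j)
  exact hne (isOrtho_self.mp (hperp.mono_right hle))

theorem eq_anglePart (hP : P.IsSymmetricProjection) (hQ : Q.IsSymmetricProjection) (i : Fin k) :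
    E i = anglePart P Q (γ i) := by
  rw [(hD.isAngularPart i).2.1, hD.inf_range_eq hP hQ i, hD.swap.inf_range_eq hQ hP i]
  rfl

theorem range_eq_angles (hP : P.IsSymmetricProjection) (hQ : Q.IsSymmetricProjection) :
    Set.range γ = angles P Q := by
  ext δ
  refine ⟨?_, fun ⟨hδ, hne⟩ => ?_⟩
  · rintro ⟨i, rfl⟩
    exact ⟨hD.mem_Ioo i, hD.eq_anglePart hP hQ i ▸ (hD.isAngularPart i).1⟩
  obtain ⟨i, hi⟩ : ∃ i, cos (γ i) ^ 2 = cos δ ^ 2 := by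
    rcases not_and_or.mp (mt sup_eq_bot_iff.mpr hne) with h | h
    · exact hD.exists_cos_sq_eq hP hQ (bijOn_cos_sq.mapsTo hδ) h
    · exact hD.swap.exists_cos_sq_eq hQ hP (bijOn_cos_sq.mapsTo hδ) h
  exact ⟨i, bijOn_cos_sq.injOn (hD.mem_Ioo i) hδ hi⟩

end IsAngularDecomposition

end EuclideanSpace

theorem exists_unique_angular_decomposition_general {N : ℕ}
    (Tm Tp : EuclideanSpace ℂ (Fin N) →ₗ[ℂ] EuclideanSpace ℂ (Fin N))
    (hTmSymm : LinearMap.IsSymmetric Tm) (hTmIdem : Tm ∘ₗ Tm = Tm)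
    (hTpSymm : LinearMap.IsSymmetric Tp) (hTpIdem : Tp ∘ₗ Tp = Tp) :
    ∃ (k : ℕ) (γ : Fin k → ℝ) (E : Fin k → Submodule ℂ (EuclideanSpace ℂ (Fin N))),
      IsAngularDecomposition Tm Tp k γ E ∧
      ∀ (k' : ℕ) (γ' : Fin k' → ℝ) (E' : Fin k' → Submodule ℂ (EuclideanSpace ℂ (Fin N))),
        IsAngularDecomposition Tm Tp k' γ' E' →
          k' = k ∧ ∀ (i : Fin k') (j : Fin k), (i : ℕ) = (j : ℕ) → γ' i = γ j ∧ E' i = E j := by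
  have hP : Tm.IsSymmetricProjection := ⟨hTmIdem, hTmSymm⟩
  have hQ : Tp.IsSymmetricProjection := ⟨hTpIdem, hTpSymm⟩
  set s := (angles_finite Tm Tp).toFinset with hs
  refine ⟨s.card, s.orderEmbOfFin rfl, fun i => anglePart Tm Tp (s.orderEmbOfFin rfl i),
    isAngularDecomposition_of_range_eq_angles hP hQ (s.orderEmbOfFin rfl).strictMono
      (by rw [Finset.range_orderEmbOfFin, hs, Set.Finite.coe_toFinset]), fun k γ E hD => ?_⟩
  have hrange := hD.range_eq_angles hP hQ
  have hk : k = s.card := by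
    rw [← Fintype.card_fin k, ← Finset.card_univ,
      ← Finset.card_image_of_injective _ hD.1.injective]
    congr 1
    ext
    simp [hs, ← hrange]
  subst hk
  have hγ : γ = s.orderEmbOfFin rfl :=
    Finset.orderEmbOfFin_unique rfl (fun i => by simp [hs, ← hrange]) hD.1
  refine ⟨rfl, fun i j hij => ?_⟩
  obtain rfl := Fin.ext hij
  exact ⟨congrFun hγ i, hγ ▸ hD.eq_anglePart hP hQ i⟩

/-- Existence and uniqueness of the angular decomposition of `ℂ^N`
associated with a pair of orthogonal projectors `T₋, T₊`. -/
theorem exists_unique_angular_decomposition {N : ℕ} (hN : 1 ≤ N)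
    (Tm Tp : EuclideanSpace ℂ (Fin N) →ₗ[ℂ] EuclideanSpace ℂ (Fin N))
    (hTmSymm : LinearMap.IsSymmetric Tm) (hTmIdem : Tm ∘ₗ Tm = Tm)
    (hTpSymm : LinearMap.IsSymmetric Tp) (hTpIdem : Tp ∘ₗ Tp = Tp) :
    ∃ (k : ℕ) (γ : Fin k → ℝ) (E : Fin k → Submodule ℂ (EuclideanSpace ℂ (Fin N))),
      IsAngularDecomposition Tm Tp k γ E ∧
      ∀ (k' : ℕ) (γ' : Fin k' → ℝ) (E' : Fin k' → Submodule ℂ (EuclideanSpace ℂ (Fin N))),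
        IsAngularDecomposition Tm Tp k' γ' E' →
          k' = k ∧ ∀ (i : Fin k') (j : Fin k), (i : ℕ) = (j : ℕ) → γ' i = γ j ∧ E' i = E j :=
  exists_unique_angular_decomposition_general Tm Tp hTmSymm hTmIdem hTpSymm hTpIdem

end
end

section
/- Let T₋, T₊ be orthogonal projectors on ℂ^N. Then Ker(T₋T₊) ∩ Ker(T₊T₋) = (Ran T₊ ∩ Ker T₋) + (Ran T₋ ∩ Ker T₊) + (Ker T₋ ∩ Ker T₊), and the three subspaces on the right are pairwise orthogonal. More precisely, every h with T₋T₊h = T₊T₋h = 0 decomposes as h = T₊h + T₋h + (h − T₊h − T₋h) with T₊h ∈ Ran T₊ ∩ Ker T₋, T₋h ∈ Ran T₋ ∩ Ker T₊, and h − T₊h − T₋h ∈ Ker T₋ ∩ Ker T₊. -/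
open Submodule

lemma idem_fix {N : ℕ} (T : EuclideanSpace ℂ (Fin N) →ₗ[ℂ] EuclideanSpace ℂ (Fin N))
    (hIdem : T ∘ₗ T = T) {x : EuclideanSpace ℂ (Fin N)}
    (hx : x ∈ LinearMap.range T) : T x = x := by
  obtain ⟨w, rfl⟩ := hx
  exact congrFun (congrArg DFunLike.coe hIdem) w

/-- `Ker(T₋T₊) ∩ Ker(T₊T₋)` is the orthogonal sum of
`Ran T₊ ∩ Ker T₋`, `Ran T₋ ∩ Ker T₊` and `Ker T₋ ∩ Ker T₊`, with the explicit
decomposition `h = T₊h + T₋h + (h - T₊h - T₋h)`. -/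
theorem ker_inter_ker_decomposition {N : ℕ}
    (Tm Tp : EuclideanSpace ℂ (Fin N) →ₗ[ℂ] EuclideanSpace ℂ (Fin N))
    (hTmSymm : LinearMap.IsSymmetric Tm) (hTmIdem : Tm ∘ₗ Tm = Tm)
    (hTpSymm : LinearMap.IsSymmetric Tp) (hTpIdem : Tp ∘ₗ Tp = Tp) :
    (LinearMap.ker (Tm ∘ₗ Tp) ⊓ LinearMap.ker (Tp ∘ₗ Tm) =
      (LinearMap.range Tp ⊓ LinearMap.ker Tm) ⊔ (LinearMap.range Tm ⊓ LinearMap.ker Tp) ⊔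
        (LinearMap.ker Tm ⊓ LinearMap.ker Tp)) ∧
    (LinearMap.range Tp ⊓ LinearMap.ker Tm).IsOrtho
      (LinearMap.range Tm ⊓ LinearMap.ker Tp) ∧
    (LinearMap.range Tp ⊓ LinearMap.ker Tm).IsOrtho
      (LinearMap.ker Tm ⊓ LinearMap.ker Tp) ∧
    (LinearMap.range Tm ⊓ LinearMap.ker Tp).IsOrtho
      (LinearMap.ker Tm ⊓ LinearMap.ker Tp) ∧
    ∀ h : EuclideanSpace ℂ (Fin N), Tm (Tp h) = 0 → Tp (Tm h) = 0 →
      Tp h ∈ LinearMap.range Tp ⊓ LinearMap.ker Tm ∧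
      Tm h ∈ LinearMap.range Tm ⊓ LinearMap.ker Tp ∧
      h - Tp h - Tm h ∈ LinearMap.ker Tm ⊓ LinearMap.ker Tp := by
  have key : ∀ h : EuclideanSpace ℂ (Fin N), Tm (Tp h) = 0 → Tp (Tm h) = 0 →
      Tp h ∈ LinearMap.range Tp ⊓ LinearMap.ker Tm ∧
      Tm h ∈ LinearMap.range Tm ⊓ LinearMap.ker Tp ∧
      h - Tp h - Tm h ∈ LinearMap.ker Tm ⊓ LinearMap.ker Tp := by
    intro h h1 h2
    refine ⟨⟨⟨h, rfl⟩, h1⟩, ⟨⟨h, rfl⟩, h2⟩, ?_, ?_⟩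
    · have : Tm (h - Tp h - Tm h) = 0 := by
        rw [map_sub, map_sub, h1, idem_fix Tm hTmIdem ⟨h, rfl⟩]; abel
      exact this
    · have : Tp (h - Tp h - Tm h) = 0 := by
        rw [map_sub, map_sub, h2, idem_fix Tp hTpIdem ⟨h, rfl⟩]; abel
      exact this
  refine ⟨?_, ?_, ?_, ?_, key⟩
  · apply le_antisymm
    · intro h hh
      obtain ⟨h1, h2⟩ := hh
      simp only [LinearMap.mem_ker, LinearMap.comp_apply] at h1 h2
      obtain ⟨m1, m2, m3⟩ := key h h1 h2
      have : h = Tp h + Tm h + (h - Tp h - Tm h) := by abel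
      rw [this]
      exact add_mem (add_mem (mem_sup_left (mem_sup_left m1))
        (mem_sup_left (mem_sup_right m2))) (mem_sup_right m3)
    · refine sup_le (sup_le ?_ ?_) ?_
      · rintro x ⟨hx1, hx2⟩
        have hx2' : Tm x = 0 := hx2
        refine ⟨?_, ?_⟩
        · show Tm (Tp x) = 0
          rw [idem_fix Tp hTpIdem hx1]; exact hx2'
        · show Tp (Tm x) = 0
          rw [hx2']; exact map_zero Tp
      · rintro x ⟨hx1, hx2⟩
        have hx2' : Tp x = 0 := hx2
        refine ⟨?_, ?_⟩
        · show Tm (Tp x) = 0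
          rw [hx2']; exact map_zero Tm
        · show Tp (Tm x) = 0
          rw [idem_fix Tm hTmIdem hx1]; exact hx2'
      · rintro x ⟨hx1, hx2⟩
        have hx1' : Tm x = 0 := hx1
        have hx2' : Tp x = 0 := hx2
        refine ⟨?_, ?_⟩
        · show Tm (Tp x) = 0
          rw [hx2']; exact map_zero Tm
        · show Tp (Tm x) = 0
          rw [hx1']; exact map_zero Tp
  · rw [Submodule.isOrtho_iff_inner_eq]
    rintro x ⟨hx1, _⟩ y ⟨_, hy2⟩
    have hy2' : Tp y = 0 := hy2
    rw [← idem_fix Tp hTpIdem hx1, hTpSymm, hy2', inner_zero_right]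
  · rw [Submodule.isOrtho_iff_inner_eq]
    rintro x ⟨hx1, _⟩ y ⟨_, hy2⟩
    have hy2' : Tp y = 0 := hy2
    rw [← idem_fix Tp hTpIdem hx1, hTpSymm, hy2', inner_zero_right]
  · rw [Submodule.isOrtho_iff_inner_eq]
    rintro x ⟨hx1, _⟩ y ⟨hy1, _⟩
    have hy1' : Tm y = 0 := hy1
    rw [← idem_fix Tm hTmIdem hx1, hTmSymm, hy1', inner_zero_right]
end

section
/- Let E₁, E₂ be subspaces of ℂ^N with dim E₁ = dim E₂ = d ≥ 1, E₁ ∩ E₂ = {0}, and E₁ ∩ E₂^⊥ = {0} (orthogonal complement taken in ℂ^N). Set G = E₁ + E₂ and let Eᵢ' = G ∩ Eᵢ^⊥ denote the orthogonal complement of Eᵢ within G for i = 1, 2. Then the four linear maps obtained by restricting orthogonal projections — the projection onto E₂ restricted to E₁, the projection onto E₂ restricted to E₁', the projection onto E₂' restricted to E₁, and the projection onto E₂' restricted to E₁' — are all bijective. -/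
/-!
An orthogonal projection `P_F` restricted to `X` has kernel `X ⊓ Fᗮ`, so it is bijective as soon as
this intersection vanishes and `dim X = dim F`. With `G = E₁ ⊔ E₂` of dimension `2d`, both relative
complements `G ⊓ Eᵢᗮ` have dimension `d`, and the four kernels reduce to `G ⊓ Gᗮ`, `E₁ ⊓ E₂`,
`E₁ ⊓ E₂ᗮ` and `E₁ᗮ ⊓ E₂`; the last vanishes because `E₁ ⊓ E₂ᗮ = ⊥` and a dimension count force
`E₁ ⊔ E₂ᗮ = ⊤`.
-/

open Module

namespace Submodule

variable {𝕜 E : Type*} [RCLike 𝕜] [NormedAddCommGroup E] [InnerProductSpace 𝕜 E]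

theorem bijective_orthogonalProjection_restrict {X F : Submodule 𝕜 E}
    [FiniteDimensional 𝕜 X] [FiniteDimensional 𝕜 F]
    (hX : X ⊓ Fᗮ = ⊥) (hdim : finrank 𝕜 X = finrank 𝕜 F) :
    Function.Bijective (fun x : X => F.orthogonalProjectionOnto (x : E)) := by
  let f : X →ₗ[𝕜] F := F.orthogonalProjectionOnto.toLinearMap ∘ₗ X.subtype
  have hf : Function.Injective f := by
    rw [← LinearMap.ker_eq_bot, eq_bot_iff]
    intro x hx
    have hx' : (x : E) ∈ X ⊓ Fᗮ := ⟨x.2, orthogonalProjectionOnto_eq_zero_iff.mp hx⟩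
    rw [hX] at hx'
    exact Subtype.ext hx'
  exact ⟨hf, (LinearMap.injective_iff_surjective_of_finrank_eq_finrank hdim).mp hf⟩

theorem finrank_sup_inf_orthogonal_left {E₁ E₂ : Submodule 𝕜 E}
    [FiniteDimensional 𝕜 E₁] [FiniteDimensional 𝕜 E₂] (h : E₁ ⊓ E₂ = ⊥) :
    finrank 𝕜 ((E₁ ⊔ E₂) ⊓ E₁ᗮ : Submodule 𝕜 E) = finrank 𝕜 E₂ := by
  have hsup := finrank_sup_add_finrank_inf_eq E₁ E₂
  rw [h, finrank_bot, add_zero] at hsup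
  rw [inf_comm]
  exact finrank_add_inf_finrank_orthogonal' le_sup_left hsup.symm

theorem finrank_sup_inf_orthogonal_right {E₁ E₂ : Submodule 𝕜 E}
    [FiniteDimensional 𝕜 E₁] [FiniteDimensional 𝕜 E₂] (h : E₁ ⊓ E₂ = ⊥) :
    finrank 𝕜 ((E₁ ⊔ E₂) ⊓ E₂ᗮ : Submodule 𝕜 E) = finrank 𝕜 E₁ := by
  rw [sup_comm]
  exact finrank_sup_inf_orthogonal_left (by rwa [inf_comm])

variable [FiniteDimensional 𝕜 E]

theorem orthogonal_inf_eq_bot_of_inf_orthogonal_eq_bot {X F : Submodule 𝕜 E}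
    (hX : X ⊓ Fᗮ = ⊥) (hdim : finrank 𝕜 X = finrank 𝕜 F) : Xᗮ ⊓ F = ⊥ := by
  have hsup : X ⊔ Fᗮ = ⊤ := by
    refine eq_top_of_disjoint X Fᗮ ?_ (disjoint_iff.mpr hX)
    rw [hdim, finrank_add_finrank_orthogonal]
  rw [← orthogonal_orthogonal F, inf_orthogonal, hsup, top_orthogonal_eq_bot]

theorem inf_orthogonal_inf_orthogonal_of_le {K G : Submodule 𝕜 E} (h : K ≤ G) :
    G ⊓ (G ⊓ Kᗮ)ᗮ = K := by
  have hperp : (G ⊓ Kᗮ)ᗮ = Gᗮ ⊔ K := by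
    rw [← orthogonal_orthogonal (Gᗮ ⊔ K), ← inf_orthogonal, orthogonal_orthogonal]
  rw [hperp, ← inf_sup_assoc_of_le _ h, inf_orthogonal_eq_bot, bot_sup_eq]

end Submodule

open Submodule

theorem restricted_projections_bijective_general {N d : ℕ}
    (E₁ E₂ : Submodule ℂ (EuclideanSpace ℂ (Fin N)))
    (h1 : Module.finrank ℂ E₁ = d) (h2 : Module.finrank ℂ E₂ = d)
    (h12 : E₁ ⊓ E₂ = ⊥) (h12perp : E₁ ⊓ E₂ᗮ = ⊥) :
    Function.Bijective
      (fun x : E₁ => orthogonalProjection E₂ (x : EuclideanSpace ℂ (Fin N))) ∧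
    Function.Bijective
      (fun x : ((E₁ ⊔ E₂) ⊓ E₁ᗮ : Submodule ℂ (EuclideanSpace ℂ (Fin N))) =>
        orthogonalProjection E₂ (x : EuclideanSpace ℂ (Fin N))) ∧
    Function.Bijective
      (fun x : E₁ =>
        orthogonalProjection ((E₁ ⊔ E₂) ⊓ E₂ᗮ) (x : EuclideanSpace ℂ (Fin N))) ∧
    Function.Bijective
      (fun x : ((E₁ ⊔ E₂) ⊓ E₁ᗮ : Submodule ℂ (EuclideanSpace ℂ (Fin N))) =>
        orthogonalProjection ((E₁ ⊔ E₂) ⊓ E₂ᗮ) (x : EuclideanSpace ℂ (Fin N))) := by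
  set G := E₁ ⊔ E₂
  have hE₁E₂ : finrank ℂ E₁ = finrank ℂ E₂ := h1.trans h2.symm
  have hE₁' : finrank ℂ (G ⊓ E₁ᗮ : Submodule ℂ _) = finrank ℂ E₂ :=
    finrank_sup_inf_orthogonal_left h12
  have hE₂' : finrank ℂ (G ⊓ E₂ᗮ : Submodule ℂ _) = finrank ℂ E₁ :=
    finrank_sup_inf_orthogonal_right h12
  have hE₂ : G ⊓ (G ⊓ E₂ᗮ)ᗮ = E₂ := inf_orthogonal_inf_orthogonal_of_le le_sup_right
  refine ⟨bijective_orthogonalProjection_restrict h12perp hE₁E₂,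
    bijective_orthogonalProjection_restrict ?_ hE₁',
    bijective_orthogonalProjection_restrict ?_ hE₂'.symm,
    bijective_orthogonalProjection_restrict ?_ (hE₁'.trans (hE₂'.trans hE₁E₂).symm)⟩
  · rw [inf_assoc, inf_orthogonal, inf_orthogonal_eq_bot]
  · rw [← inf_of_le_left (le_sup_left : E₁ ≤ G), inf_assoc, hE₂, h12]
  · rw [inf_comm G, inf_assoc, hE₂,
      orthogonal_inf_eq_bot_of_inf_orthogonal_eq_bot h12perp hE₁E₂]

/-- If `dim E₁ = dim E₂ = d ≥ 1`, `E₁ ∩ E₂ = 0` and `E₁ ∩ E₂^⊥ = 0`,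
then with `G = E₁ + E₂`, `Eᵢ' = G ∩ Eᵢ^⊥`, the orthogonal projections onto `E₂` and `E₂'`
restricted to `E₁` and to `E₁'` are all bijective. -/
theorem restricted_projections_bijective {N d : ℕ} (hd : 1 ≤ d)
    (E₁ E₂ : Submodule ℂ (EuclideanSpace ℂ (Fin N)))
    (h1 : Module.finrank ℂ E₁ = d) (h2 : Module.finrank ℂ E₂ = d)
    (h12 : E₁ ⊓ E₂ = ⊥) (h12perp : E₁ ⊓ E₂ᗮ = ⊥) :
    Function.Bijective
      (fun x : E₁ => orthogonalProjection E₂ (x : EuclideanSpace ℂ (Fin N))) ∧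
    Function.Bijective
      (fun x : ((E₁ ⊔ E₂) ⊓ E₁ᗮ : Submodule ℂ (EuclideanSpace ℂ (Fin N))) =>
        orthogonalProjection E₂ (x : EuclideanSpace ℂ (Fin N))) ∧
    Function.Bijective
      (fun x : E₁ =>
        orthogonalProjection ((E₁ ⊔ E₂) ⊓ E₂ᗮ) (x : EuclideanSpace ℂ (Fin N))) ∧
    Function.Bijective
      (fun x : ((E₁ ⊔ E₂) ⊓ E₁ᗮ : Submodule ℂ (EuclideanSpace ℂ (Fin N))) =>
        orthogonalProjection ((E₁ ⊔ E₂) ⊓ E₂ᗮ) (x : EuclideanSpace ℂ (Fin N))) :=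
  restricted_projections_bijective_general E₁ E₂ h1 h2 h12 h12perp
end

section
/- There exist constants c₁, c₂ > 0 such that for all z ∈ ℂ: c₁ · e^{|Im z|} · min(1, dist(z, πℤ)) ≤ |sin z| ≤ c₂ · e^{|Im z|} · min(1, dist(z, πℤ)), where dist(z, πℤ) denotes the distance in ℂ from z to the set {πn : n ∈ ℤ}. -/
/-! Since `‖sin (x + iy)‖² = sin² x + sinh² y` and `‖sin‖` is `π`-periodic, the bounds follow from
real inequalities. Upper bound: `sin² x + sinh² y ≤ cosh² y ≤ e^{2|y|}`, and after translating `z`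
by an element of `πℤ`, `|sin x| ≤ |x|`, `|sinh y| ≤ |y| e^{|y|}` give `‖sin z‖ ≤ e^{|y|} dist(z, πℤ)`.
Lower bound: for `|y| ≥ 1/2`, `‖sin z‖ ≥ |sinh y| ≥ e^{|y|}/4`; for `|y| < 1/2`, translate `z` into
the strip `|Re z| ≤ π/2`, where Jordan's inequality gives `‖sin z‖ ≥ (2/π) ‖z‖`. -/

open Real

namespace Real

lemma cosh_le_exp_abs (y : ℝ) : cosh y ≤ exp |y| := by
  rw [← cosh_abs, cosh_eq]
  linarith [exp_le_exp.2 (show -|y| ≤ |y| by linarith [abs_nonneg y])]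

lemma abs_sinh_le_mul_exp_abs (y : ℝ) : |sinh y| ≤ |y| * exp |y| := by
  rw [abs_sinh, sinh_eq]
  have h := add_one_le_exp (-(2 * |y|))
  have h2 : exp (-|y|) = exp |y| * exp (-(2 * |y|)) := by rw [← exp_add]; ring_nf
  nlinarith [exp_pos |y|]

lemma exp_le_four_mul_sinh {t : ℝ} (ht : 1 / 2 ≤ t) : exp t ≤ 4 * sinh t := by
  have h := add_one_le_exp (2 * t)
  have h2 : exp (2 * t) = exp t * exp t := by rw [← exp_add]; ring_nf
  have h3 : exp (-t) * exp t = 1 := by rw [← exp_add]; simp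
  rw [sinh_eq]
  nlinarith [exp_pos t, exp_pos (-t)]

end Real

namespace Complex

lemma norm_sin_sq (z : ℂ) : ‖sin z‖ ^ 2 = Real.sin z.re ^ 2 + Real.sinh z.im ^ 2 := by
  rw [Complex.sq_norm, sin_eq, ← ofReal_sin, ← ofReal_cos, ← ofReal_sinh, ← ofReal_cosh,
    ← ofReal_mul, ← ofReal_mul, normSq_add_mul_I]
  nlinarith [Real.sin_sq_add_cos_sq z.re, Real.cosh_sq z.im]

lemma norm_sin_le_exp_abs_im (z : ℂ) : ‖sin z‖ ≤ Real.exp |z.im| := by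
  refine (pow_le_pow_iff_left₀ (norm_nonneg _) (Real.exp_pos _).le two_ne_zero).1 ?_
  have hcosh := Real.cosh_le_exp_abs z.im
  rw [norm_sin_sq]
  nlinarith [Real.sin_sq_le_one z.re, Real.cosh_sq z.im, Real.cosh_pos z.im]

lemma norm_sin_le_norm_mul_exp_abs_im (z : ℂ) : ‖sin z‖ ≤ ‖z‖ * Real.exp |z.im| := by
  refine (pow_le_pow_iff_left₀ (norm_nonneg _) (by positivity) two_ne_zero).1 ?_
  have hre : Real.sin z.re ^ 2 ≤ z.re ^ 2 := Real.sin_sq_le_sq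
  have him : Real.sinh z.im ^ 2 ≤ (z.im * Real.exp |z.im|) ^ 2 := by
    rw [← sq_abs, ← sq_abs (_ * _), abs_mul, abs_of_pos (Real.exp_pos _)]
    exact pow_le_pow_left₀ (abs_nonneg _) (Real.abs_sinh_le_mul_exp_abs _) 2
  have hexp : 1 ≤ Real.exp |z.im| := Real.one_le_exp (abs_nonneg _)
  have hre' : z.re ^ 2 ≤ z.re ^ 2 * Real.exp |z.im| ^ 2 :=
    le_mul_of_one_le_right (sq_nonneg _) (one_le_pow₀ hexp)
  calc ‖sin z‖ ^ 2 ≤ z.re ^ 2 * Real.exp |z.im| ^ 2 + (z.im * Real.exp |z.im|) ^ 2 := by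
        rw [norm_sin_sq]; linarith
    _ = (‖z‖ * Real.exp |z.im|) ^ 2 := by simp only [mul_pow, Complex.sq_norm, normSq_apply]; ring

lemma abs_sinh_im_le_norm_sin (z : ℂ) : |Real.sinh z.im| ≤ ‖sin z‖ := by
  rw [← abs_norm]
  exact sq_le_sq.1 (by rw [norm_sin_sq]; nlinarith [sq_nonneg (Real.sin z.re)])

lemma mul_norm_le_norm_sin {z : ℂ} (hz : |z.re| ≤ π / 2) : 2 / π * ‖z‖ ≤ ‖sin z‖ := by
  refine (pow_le_pow_iff_left₀ (by positivity) (norm_nonneg _) two_ne_zero).1 ?_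
  have hre : (2 / π * |z.re|) ^ 2 ≤ |Real.sin z.re| ^ 2 :=
    pow_le_pow_left₀ (by positivity) (Real.mul_abs_le_abs_sin hz) 2
  have him : |z.im| ^ 2 ≤ |Real.sinh z.im| ^ 2 := by
    rw [Real.abs_sinh]
    exact pow_le_pow_left₀ (abs_nonneg _) (Real.self_le_sinh_iff.2 (abs_nonneg _)) 2
  have him' : (2 / π) ^ 2 * z.im ^ 2 ≤ z.im ^ 2 :=
    mul_le_of_le_one_left (sq_nonneg _)
      (pow_le_one₀ (by positivity) ((div_le_one pi_pos).2 two_le_pi))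
  simp only [sq_abs, mul_pow] at hre him
  calc (2 / π * ‖z‖) ^ 2 = (2 / π) ^ 2 * z.re ^ 2 + (2 / π) ^ 2 * z.im ^ 2 := by
        rw [mul_pow, Complex.sq_norm, normSq_apply]; ring
    _ ≤ ‖sin z‖ ^ 2 := by rw [norm_sin_sq]; linarith

lemma norm_sin_sub_int_mul_pi (z : ℂ) (n : ℤ) : ‖sin (z - n * π)‖ = ‖sin z‖ := by
  simp [sin_antiperiodic.sub_int_mul_eq]

lemma exists_abs_re_sub_int_mul_pi_le (z : ℂ) : ∃ n : ℤ, |(z - n * π).re| ≤ π / 2 := by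
  refine ⟨round (z.re / π), ?_⟩
  have hround := abs_sub_round (z.re / π)
  have hre : (z - round (z.re / π) * π).re = (z.re / π - round (z.re / π)) * π := by
    simp only [sub_re, mul_re, intCast_re, ofReal_re, intCast_im, ofReal_im]
    field_simp
    ring
  rw [hre, abs_mul, abs_of_pos pi_pos]
  nlinarith [pi_pos]

end Complex

open Complex Metric

abbrev intMulPi : Set ℂ := Set.range fun n : ℤ => ((n : ℂ) * Real.pi)

lemma mul_infDist_intMulPi_le_norm_sin (z : ℂ) : 2 / π * infDist z intMulPi ≤ ‖sin z‖ := by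
  obtain ⟨n, hn⟩ := exists_abs_re_sub_int_mul_pi_le z
  calc 2 / π * infDist z intMulPi ≤ 2 / π * ‖z - n * π‖ := by
        gcongr
        rw [← dist_eq_norm]
        exact infDist_le_dist_of_mem ⟨n, rfl⟩
    _ ≤ ‖sin (z - n * π)‖ := mul_norm_le_norm_sin hn
    _ = ‖sin z‖ := norm_sin_sub_int_mul_pi z n

lemma norm_sin_le_infDist_intMulPi_mul_exp (z : ℂ) :
    ‖sin z‖ ≤ infDist z intMulPi * Real.exp |z.im| := by
  rw [← div_le_iff₀ (Real.exp_pos _)]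
  refine (le_infDist (Set.range_nonempty _)).2 ?_
  rintro _ ⟨n, rfl⟩
  rw [div_le_iff₀ (Real.exp_pos _), dist_eq_norm, ← norm_sin_sub_int_mul_pi z n]
  simpa using norm_sin_le_norm_mul_exp_abs_im (z - n * π)

lemma exp_abs_im_mul_min_infDist_le (z : ℂ) :
    Real.exp |z.im| * min 1 (infDist z intMulPi) ≤ 4 * ‖sin z‖ := by
  rcases le_or_gt (1 / 2) |z.im| with him | him
  · calc Real.exp |z.im| * min 1 (infDist z intMulPi) ≤ Real.exp |z.im| :=
          mul_le_of_le_one_right (Real.exp_pos _).le (min_le_left _ _)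
      _ ≤ 4 * Real.sinh |z.im| := Real.exp_le_four_mul_sinh him
      _ ≤ 4 * ‖sin z‖ := by
          rw [← Real.abs_sinh]
          exact mul_le_mul_of_nonneg_left (abs_sinh_im_le_norm_sin z) four_pos.le
  · have hexp : Real.exp |z.im| ≤ 2 :=
      (Real.exp_bound_div_one_sub_of_interval (abs_nonneg _) (by linarith)).trans
        (by rw [div_le_iff₀ (by linarith)]; linarith)
    have hdist := mul_infDist_intMulPi_le_norm_sin z
    rw [div_mul_eq_mul_div, div_le_iff₀ pi_pos] at hdist
    calc Real.exp |z.im| * min 1 (infDist z intMulPi) ≤ 2 * infDist z intMulPi :=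
          mul_le_mul hexp (min_le_right _ _) (le_min zero_le_one infDist_nonneg) two_pos.le
      _ ≤ 4 * ‖sin z‖ := by nlinarith [pi_lt_four, norm_nonneg (sin z)]

lemma norm_sin_le_exp_abs_im_mul_min_infDist (z : ℂ) :
    ‖sin z‖ ≤ Real.exp |z.im| * min 1 (infDist z intMulPi) := by
  rw [mul_min_of_nonneg _ _ (Real.exp_pos _).le, mul_one, mul_comm]
  exact le_min (norm_sin_le_exp_abs_im z) (norm_sin_le_infDist_intMulPi_mul_exp z)

/-- There are constants `c₁, c₂ > 0` with
`c₁ e^{|Im z|} min(1, dist(z, πℤ)) ≤ |sin z| ≤ c₂ e^{|Im z|} min(1, dist(z, πℤ))`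
for all `z ∈ ℂ`. -/
theorem sin_two_sided_estimate :
    ∃ c₁ c₂ : ℝ, 0 < c₁ ∧ 0 < c₂ ∧ ∀ z : ℂ,
      c₁ * Real.exp |z.im| *
          min 1 (Metric.infDist z (Set.range fun n : ℤ => ((n : ℂ) * Real.pi))) ≤
        ‖Complex.sin z‖ ∧
      ‖Complex.sin z‖ ≤
        c₂ * Real.exp |z.im| *
          min 1 (Metric.infDist z (Set.range fun n : ℤ => ((n : ℂ) * Real.pi))) := by
  refine ⟨1 / 4, 1, by norm_num, one_pos, fun z => ⟨?_, ?_⟩⟩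
  · linarith [exp_abs_im_mul_min_infDist_le z]
  · simpa only [one_mul] using norm_sin_le_exp_abs_im_mul_min_infDist z
end

section
/- Let W be a ℂ^{N×N}-valued analytic function on a neighborhood of λ₀ ∈ ℂ, let P ∈ ℂ^{N×N} be the orthogonal projector onto Ker W(λ₀) (the kernel of the linear map v ↦ W(λ₀)v on ℂ^N), and set Z = W'(λ₀)·P + W(λ₀)·(I − P). Then there exist a neighborhood U of λ₀ and an analytic matrix-valued function Y on U with Y(λ₀) = Z and W(λ) = Y(λ)·((λ−λ₀)·P + (I − P)) for all λ ∈ U. -/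
open Matrix

private lemma analyticAt_dslope_aux {f : ℂ → ℂ} {a z : ℂ} (hf : AnalyticAt ℂ f z)
    (hfa : AnalyticAt ℂ f a) : AnalyticAt ℂ (dslope f a) z := by
  rcases eq_or_ne z a with rfl | hz
  · obtain ⟨p, hp⟩ := hfa
    exact ⟨p.fslope, hp.has_fpower_series_dslope_fslope⟩
  · have h1 : AnalyticAt ℂ (fun w => (w - a)⁻¹ * (f w - f a)) z :=
      ((analyticAt_id.sub analyticAt_const).inv (sub_ne_zero.2 hz)).mul
        (hf.sub analyticAt_const)
    refine h1.congr ?_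
    filter_upwards [isOpen_ne.mem_nhds hz] with w hw
    rw [dslope_of_ne _ hw, slope_def_field]
    field_simp [sub_ne_zero.2 hw]

/-- If `W` is analytic near `λ₀` and `P` is the orthogonal projector onto
`Ker W(λ₀)`, then `W(λ) = Y(λ)((λ-λ₀)P + (I-P))` near `λ₀` for an analytic `Y` with
`Y(λ₀) = Z = W'(λ₀)P + W(λ₀)(I-P)`. -/
theorem wronskian_local_factorization {N : ℕ} (hN : 1 ≤ N) (lam0 : ℂ)
    (W : ℂ → Matrix (Fin N) (Fin N) ℂ) (W' P : Matrix (Fin N) (Fin N) ℂ)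
    (hW : ∀ i j, AnalyticAt ℂ (fun z => W z i j) lam0)
    (hW' : ∀ i j, HasDerivAt (fun z => W z i j) (W' i j) lam0)
    (hPH : Pᴴ = P) (hP2 : P * P = P)
    (hPker : ∀ v : Fin N → ℂ, W lam0 *ᵥ v = 0 ↔ P *ᵥ v = v) :
    ∃ U : Set ℂ, IsOpen U ∧ lam0 ∈ U ∧
      ∃ Y : ℂ → Matrix (Fin N) (Fin N) ℂ,
        (∀ i j, ∀ z ∈ U, AnalyticAt ℂ (fun w => Y w i j) z) ∧
        Y lam0 = W' * P + W lam0 * (1 - P) ∧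
        ∀ z ∈ U, W z = Y z * ((z - lam0) • P + (1 - P)) := by
  classical
  -- auxiliary facts about P
  have hWP : W lam0 * P = 0 := by
    ext i j
    have hv : P *ᵥ (P *ᵥ Pi.single j (1 : ℂ)) = P *ᵥ Pi.single j (1 : ℂ) := by
      rw [mulVec_mulVec, hP2]
    have h0 : W lam0 *ᵥ (P *ᵥ Pi.single j (1 : ℂ)) = 0 := (hPker _).2 hv
    have := congrFun h0 i
    rw [mulVec_mulVec] at this
    simpa using this
  have hP1P : P * (1 - P) = 0 := by rw [mul_sub, mul_one, hP2, sub_self]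
  have h1PP : (1 - P) * P = 0 := by rw [sub_mul, one_mul, hP2, sub_self]
  have h1P1P : (1 - P) * (1 - P) = 1 - P := by
    rw [sub_mul, one_mul, mul_sub, mul_one, hP2]
    abel
  -- the divided-difference matrix
  set D : ℂ → Matrix (Fin N) (Fin N) ℂ :=
    fun z => Matrix.of fun i j => dslope (fun w => W w i j) lam0 z with hD
  have hDlam0 : D lam0 = W' := by
    ext i j
    simp only [hD, Matrix.of_apply, dslope_same]
    exact (hW' i j).deriv
  have hkey : ∀ z, (z - lam0) • D z = W z - W lam0 := by
    intro z
    ext i j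
    simp only [hD, Matrix.smul_apply, Matrix.sub_apply, Matrix.of_apply, smul_eq_mul]
    simpa [smul_eq_mul] using sub_smul_dslope (fun w => W w i j) lam0 z
  set Y : ℂ → Matrix (Fin N) (Fin N) ℂ := fun z => D z * P + W z * (1 - P) with hY
  -- the neighborhood
  set U : Set ℂ := ⋂ i, ⋂ j, {z | AnalyticAt ℂ (fun w => W w i j) z} with hU
  have hUopen : IsOpen U := isOpen_iInter_of_finite fun i =>
    isOpen_iInter_of_finite fun j => isOpen_analyticAt ℂ _
  have hUmem : lam0 ∈ U := by
    simp only [hU, Set.mem_iInter, Set.mem_setOf_eq]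
    exact fun i j => hW i j
  have hUan : ∀ z ∈ U, ∀ i j, AnalyticAt ℂ (fun w => W w i j) z := by
    intro z hz i j
    simp only [hU, Set.mem_iInter, Set.mem_setOf_eq] at hz
    exact hz i j
  refine ⟨U, hUopen, hUmem, Y, ?_, ?_, ?_⟩
  · intro i j z hz
    have hYij : (fun w => Y w i j)
        = fun w => (∑ k, dslope (fun u => W u i k) lam0 w * P k j)
          + ∑ k, W w i k * (1 - P) k j := by
      funext w
      simp [hY, hD, Matrix.add_apply, Matrix.mul_apply]
    rw [hYij]
    refine AnalyticAt.add ?_ ?_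
    · exact Finset.analyticAt_fun_sum _ fun k _ =>
        (analyticAt_dslope_aux (hUan z hz i k) (hW i k)).mul analyticAt_const
    · exact Finset.analyticAt_fun_sum _ fun k _ => (hUan z hz i k).mul analyticAt_const
  · rw [hY]; simp only [hDlam0]
  · intro z hz
    have h1 : Y z * ((z - lam0) • P + (1 - P))
        = (z - lam0) • (D z * P) + W z * (1 - P) := by
      rw [hY, mul_add, Matrix.mul_smul, add_mul, add_mul, mul_assoc, mul_assoc,
        mul_assoc, mul_assoc, hP2, h1PP, hP1P, h1P1P, mul_zero, mul_zero,
        add_zero, zero_add]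
    have h2 : (z - lam0) • (D z * P) = W z * P := by
      rw [← Matrix.smul_mul, hkey, sub_mul, hWP, sub_zero]
    rw [h1, h2, ← mul_add]
    simp
end

section
/- Let W be a ℂ^{N×N}-valued analytic function on a neighborhood of λ₀ ∈ ℂ, let P be the orthogonal projector onto Ker W(λ₀), and suppose Z = W'(λ₀)·P + W(λ₀)·(I − P) is invertible. Then, with k = dim Ker W(λ₀), the scalar analytic function λ ↦ det W(λ) has a zero of order exactly k at λ₀; more precisely, det W(λ) = (λ−λ₀)^k · h(λ) for an analytic function h near λ₀ with h(λ₀) = det Z ≠ 0. -/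
/-!
Since `W(λ₀) P = 0`, the analytic function `W(λ) P` vanishes at `λ₀`, so `W(λ) P = (λ - λ₀) G(λ)`
with `G` analytic and `G(λ₀) = W'(λ₀) P`. Hence `W(λ) = F(λ) ((λ - λ₀) P + (I - P))` with
`F = G P + W (I - P)` analytic and `F(λ₀) = Z`. An idempotent `P` acts as the identity on its range
and as `0` on its kernel, a complement of the range, so `det (c P + (I - P)) = c ^ rank P`; and
`rank P = dim Ker W(λ₀)` because the range of `P` is `Ker W(λ₀)`.
-/

open Matrix Module LinearMap

theorem LinearMap.det_smul_add_one_sub_of_isIdempotentElem {K V : Type*} [Field K]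
    [AddCommGroup V] [Module K V] [FiniteDimensional K V] {f : Module.End K V}
    (hf : IsIdempotentElem f) (a : K) :
    (a • f + (1 - f)).det = a ^ finrank K (range f) := by
  have hproj := hf.isProj_range
  set e := (range f).prodEquivOfIsCompl (ker f) hproj.isCompl
  have hblock : a • prodMap LinearMap.id 0 + (1 - prodMap LinearMap.id 0) =
      (prodMap (a • LinearMap.id) LinearMap.id : Module.End K (range f × ker f)) := by
    ext <;> simp
  have hconj : a • f + (1 - f) = e.conj (prodMap (a • LinearMap.id) LinearMap.id) := by
    calc a • f + (1 - f)
        = a • e.conj (prodMap LinearMap.id 0) + (1 - e.conj (prodMap LinearMap.id 0)) := by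
          rw [← hproj.eq_conj_prodMap]
      _ = _ := by
          rw [← hblock, map_add, map_smul, map_sub, Module.End.one_eq_id, Module.End.one_eq_id,
            LinearEquiv.conj_id]
  rw [hconj, LinearEquiv.conj_apply, comp_assoc, det_conj, det_prodMap, det_smul, det_id, det_id]
  simp

namespace Matrix

section Algebra

variable {R m n : Type*} [CommRing R] [Fintype n]

theorem det_smul_add_one_sub_of_isIdempotentElem {K : Type*} [Field K] [DecidableEq n]
    {P : Matrix n n K} (hP : IsIdempotentElem P) (a : K) :
    (a • P + (1 - P)).det = a ^ P.rank := by
  have := LinearMap.det_smul_add_one_sub_of_isIdempotentElem (hP.map toLinAlgEquiv') a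
  rw [← map_smul, ← map_one toLinAlgEquiv', ← map_sub, ← map_add] at this
  change LinearMap.det (toLin' _) = a ^ finrank K (range (toLin' P)) at this
  rwa [det_toLin', toLin'_apply'] at this

theorem range_mulVecLin_eq_ker_of_isIdempotentElem {A : Matrix m n R} {P : Matrix n n R}
    (hP : IsIdempotentElem P) (hAP : ∀ v, A *ᵥ v = 0 ↔ P *ᵥ v = v) :
    range P.mulVecLin = ker A.mulVecLin := by
  ext v
  simp only [mem_range, mem_ker, mulVecLin_apply]
  constructor
  · rintro ⟨u, rfl⟩
    rw [hAP, mulVec_mulVec, hP.eq]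
  · exact fun hv => ⟨v, (hAP v).mp hv⟩

theorem mul_eq_zero_of_range_mulVecLin_le_ker {A : Matrix m n R} {P : Matrix n n R}
    (h : range P.mulVecLin ≤ ker A.mulVecLin) : A * P = 0 := by
  classical
  apply toLin'.injective
  rwa [toLin'_mul, map_zero, toLin'_apply', toLin'_apply', ← range_le_ker_iff]

theorem mul_smul_add_one_sub_of_isIdempotentElem [DecidableEq n] {P : Matrix n n R}
    (hP : IsIdempotentElem P) (B C : Matrix m n R) (c : R) :
    (B * P + C * (1 - P)) * (c • P + (1 - P)) = c • (B * P) + C * (1 - P) := by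
  rw [Matrix.mul_add, Matrix.add_mul, Matrix.add_mul, Matrix.mul_smul, Matrix.mul_smul,
    Matrix.mul_assoc, Matrix.mul_assoc, Matrix.mul_assoc, Matrix.mul_assoc, hP.eq,
    hP.mul_one_sub_self, hP.one_sub_mul_self, hP.one_sub.eq]
  simp

end Algebra

section Analytic

variable {𝕜 m n p : Type*} [NontriviallyNormedField 𝕜]

theorem analyticAt_det {E : Type*} [NormedAddCommGroup E] [NormedSpace 𝕜 E]
    [Fintype n] [DecidableEq n] {M : E → Matrix n n 𝕜} {x : E}
    (hM : ∀ i j, AnalyticAt 𝕜 (fun z => M z i j) x) : AnalyticAt 𝕜 (fun z => (M z).det) x := by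
  simp only [det_apply']
  exact Finset.analyticAt_fun_sum _ fun σ _ =>
    analyticAt_const.mul (Finset.analyticAt_fun_prod _ fun i _ => hM (σ i) i)

theorem analyticAt_mul_const_apply {E : Type*} [NormedAddCommGroup E] [NormedSpace 𝕜 E]
    [Fintype n] {M : E → Matrix m n 𝕜} {x : E} (hM : ∀ i j, AnalyticAt 𝕜 (fun z => M z i j) x)
    (A : Matrix n p 𝕜) (i : m) (j : p) : AnalyticAt 𝕜 (fun z => (M z * A) i j) x := by
  simp only [mul_apply]
  exact Finset.analyticAt_fun_sum _ fun k _ => (hM i k).mul analyticAt_const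

theorem hasDerivAt_mul_const_apply [Fintype n] {M : 𝕜 → Matrix m n 𝕜} {M' : Matrix m n 𝕜}
    {x : 𝕜} (hM : ∀ i j, HasDerivAt (fun z => M z i j) (M' i j) x) (A : Matrix n p 𝕜)
    (i : m) (j : p) :
    HasDerivAt (fun z => (M z * A) i j) ((M' * A) i j) x := by
  simp only [mul_apply]
  exact HasDerivAt.fun_sum fun k _ => (hM i k).mul_const _

theorem exists_analyticAt_eq_sub_smul {f : 𝕜 → Matrix m n 𝕜} {f' : Matrix m n 𝕜} {x : 𝕜}
    (hf : ∀ i j, AnalyticAt 𝕜 (fun z => f z i j) x)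
    (hf' : ∀ i j, HasDerivAt (fun z => f z i j) (f' i j) x) (hfx : f x = 0) :
    ∃ G : 𝕜 → Matrix m n 𝕜, (∀ i j, AnalyticAt 𝕜 (fun z => G z i j) x) ∧ G x = f' ∧
      ∀ z, f z = (z - x) • G z := by
  refine ⟨fun z => of fun i j => dslope (fun w => f w i j) x z, fun i j => ?_, ?_, fun z => ?_⟩
  · obtain ⟨p, hp⟩ := hf i j
    exact hp.has_fpower_series_dslope_fslope.analyticAt
  · ext i j
    exact (dslope_same _ _).trans (hf' i j).deriv
  · ext i j
    simpa [hfx] using (sub_smul_dslope (fun w => f w i j) x z).symm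

theorem exists_analyticAt_eq_mul_smul_add_one_sub [Fintype n] [DecidableEq n]
    {W : 𝕜 → Matrix m n 𝕜} {W' : Matrix m n 𝕜} {P : Matrix n n 𝕜} {x : 𝕜}
    (hW : ∀ i j, AnalyticAt 𝕜 (fun z => W z i j) x)
    (hW' : ∀ i j, HasDerivAt (fun z => W z i j) (W' i j) x)
    (hP : IsIdempotentElem P) (hWP : W x * P = 0) :
    ∃ F : 𝕜 → Matrix m n 𝕜, (∀ i j, AnalyticAt 𝕜 (fun z => F z i j) x) ∧
      F x = W' * P + W x * (1 - P) ∧ ∀ z, W z = F z * ((z - x) • P + (1 - P)) := by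
  obtain ⟨G, hGa, hGx, hG⟩ := exists_analyticAt_eq_sub_smul (analyticAt_mul_const_apply hW P)
    (hasDerivAt_mul_const_apply hW' P) hWP
  refine ⟨fun z => G z * P + W z * (1 - P), fun i j => ?_,
    by simp only [hGx, Matrix.mul_assoc, hP.eq], fun z => ?_⟩
  · exact (analyticAt_mul_const_apply hGa P i j).add (analyticAt_mul_const_apply hW _ i j)
  · beta_reduce
    rw [mul_smul_add_one_sub_of_isIdempotentElem hP, ← Matrix.smul_mul, ← hG, Matrix.mul_assoc,
      hP.eq, ← Matrix.mul_add, add_sub_cancel, Matrix.mul_one]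

end Analytic

end Matrix

theorem det_wronskian_zero_order_general {N : ℕ} (lam0 : ℂ)
    (W : ℂ → Matrix (Fin N) (Fin N) ℂ) (W' P : Matrix (Fin N) (Fin N) ℂ)
    (hW : ∀ i j, AnalyticAt ℂ (fun z => W z i j) lam0)
    (hW' : ∀ i j, HasDerivAt (fun z => W z i j) (W' i j) lam0)
    (hP2 : P * P = P)
    (hPker : ∀ v : Fin N → ℂ, W lam0 *ᵥ v = 0 ↔ P *ᵥ v = v)
    (hZ : IsUnit (W' * P + W lam0 * (1 - P))) :
    ∃ h : ℂ → ℂ, AnalyticAt ℂ h lam0 ∧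
      h lam0 = (W' * P + W lam0 * (1 - P)).det ∧
      (W' * P + W lam0 * (1 - P)).det ≠ 0 ∧
      ∀ᶠ z in nhds lam0,
        (W z).det =
          (z - lam0) ^ (Module.finrank ℂ (LinearMap.ker (Matrix.mulVecLin (W lam0)))) *
            h z := by
  have hP : IsIdempotentElem P := hP2
  have hrange := range_mulVecLin_eq_ker_of_isIdempotentElem hP hPker
  obtain ⟨F, hFa, hFx, hWF⟩ := exists_analyticAt_eq_mul_smul_add_one_sub hW hW' hP
    (mul_eq_zero_of_range_mulVecLin_le_ker hrange.le)
  refine ⟨fun z => (F z).det, analyticAt_det hFa, congrArg det hFx,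
    ((Matrix.isUnit_iff_isUnit_det _).mp hZ).ne_zero, Filter.Eventually.of_forall fun z => ?_⟩
  rw [hWF z, det_mul, det_smul_add_one_sub_of_isIdempotentElem hP, Matrix.rank, hrange, mul_comm]

/-- If `W` is analytic near `λ₀`, `P` is the orthogonal projector onto
`Ker W(λ₀)` and `Z = W'(λ₀)P + W(λ₀)(I-P)` is invertible, then `det W` has a zero of order
exactly `k = dim Ker W(λ₀)` at `λ₀`: `det W(λ) = (λ-λ₀)^k h(λ)` with `h` analytic and
`h(λ₀) = det Z ≠ 0`. -/
theorem det_wronskian_zero_order {N : ℕ} (hN : 1 ≤ N) (lam0 : ℂ)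
    (W : ℂ → Matrix (Fin N) (Fin N) ℂ) (W' P : Matrix (Fin N) (Fin N) ℂ)
    (hW : ∀ i j, AnalyticAt ℂ (fun z => W z i j) lam0)
    (hW' : ∀ i j, HasDerivAt (fun z => W z i j) (W' i j) lam0)
    (hPH : Pᴴ = P) (hP2 : P * P = P)
    (hPker : ∀ v : Fin N → ℂ, W lam0 *ᵥ v = 0 ↔ P *ᵥ v = v)
    (hZ : IsUnit (W' * P + W lam0 * (1 - P))) :
    ∃ h : ℂ → ℂ, AnalyticAt ℂ h lam0 ∧
      h lam0 = (W' * P + W lam0 * (1 - P)).det ∧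
      (W' * P + W lam0 * (1 - P)).det ≠ 0 ∧
      ∀ᶠ z in nhds lam0,
        (W z).det =
          (z - lam0) ^ (Module.finrank ℂ (LinearMap.ker (Matrix.mulVecLin (W lam0)))) *
            h z :=
  det_wronskian_zero_order_general lam0 W W' P hW hW' hP2 hPker hZ
end

section
/- Let W be a ℂ^{N×N}-valued analytic function on a neighborhood of λ₀ ∈ ℂ, let P be the orthogonal projector onto Ker W(λ₀), and suppose Z = W'(λ₀)·P + W(λ₀)·(I − P) is invertible. Let ζ be a ℂ^{N×N}-valued analytic function on a neighborhood of λ₀ with ζ(λ₀)·P = 0. Then there exist a neighborhood U of λ₀ and an analytic matrix-valued function H on U such that for every λ ∈ U with λ ≠ λ₀ the matrix W(λ) is invertible and H(λ) = ζ(λ)·W(λ)⁻¹; i.e., ζ(λ)·W(λ)⁻¹ extends analytically across λ₀. -/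
/-!
Put `B(z) = (z - λ₀)⁻¹ • P + (I - P)`, a unit for `z ≠ λ₀` because `P` is idempotent. Since
`W(λ₀) P = 0`, writing `W(z) = W(λ₀) + (z - λ₀) R(z)` with `R` the analytic difference quotient
(`dslope`) gives `W(z) B(z) = R(z) P + W(z) (I - P)`. The right side is analytic and equals `Z` at
`λ₀`, so it stays a unit near `λ₀`; the same computation with `ζ(λ₀) P = 0` shows that
`ζ W⁻¹ = (ζ B) (W B)⁻¹` is a product of analytic functions there.

The argument runs in any complete normed algebra. Matrices get the `ℓ²` operator norm because its
topology is definitionally the entrywise one, so entrywise derivatives are matrix derivatives.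
-/

open Matrix Filter Topology

theorem AnalyticAt.dslope {𝕜 E : Type*} [NontriviallyNormedField 𝕜] [NormedAddCommGroup E]
    [NormedSpace 𝕜 E] {f : 𝕜 → E} {a z : 𝕜} (ha : AnalyticAt 𝕜 f a) (hz : AnalyticAt 𝕜 f z) :
    AnalyticAt 𝕜 (dslope f a) z := by
  rcases eq_or_ne z a with rfl | hza
  · obtain ⟨p, hp⟩ := ha
    exact ⟨_, hp.has_fpower_series_dslope_fslope⟩
  · have hslope : AnalyticAt 𝕜 (fun w ↦ (w - a)⁻¹ • (f w - f a)) z := by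
      fun_prop (disch := exact sub_ne_zero.2 hza)
    refine hslope.congr ?_
    filter_upwards [isOpen_ne.mem_nhds hza] with w hw
    rw [dslope_of_ne f hw, slope_def_module]

theorem IsIdempotentElem.isUnit_smul_add_one_sub {K A : Type*} [Field K] [Ring A] [Algebra K A]
    {P : A} (hP : IsIdempotentElem P) {c : K} (hc : c ≠ 0) : IsUnit (c • P + (1 - P)) := by
  have hP₁ : P * (1 - P) = 0 := by rw [mul_sub, mul_one, hP.eq, sub_self]
  have hP₂ : (1 - P) * P = 0 := by rw [sub_mul, one_mul, hP.eq, sub_self]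
  refine ⟨⟨c • P + (1 - P), c⁻¹ • P + (1 - P), ?_, ?_⟩, rfl⟩ <;>
  · simp only [add_mul, mul_add, smul_mul_assoc, mul_smul_comm, hP.eq, hP₁, hP₂, hP.one_sub.eq,
      smul_zero, add_zero, zero_add, smul_smul, mul_inv_cancel₀ hc, inv_mul_cancel₀ hc, one_smul,
      add_sub_cancel]

theorem Ring.inverse_mul_units {M₀ : Type*} [MonoidWithZero M₀] (x : M₀) (u : M₀ˣ) :
    Ring.inverse (x * u) = ↑u⁻¹ * Ring.inverse x := by
  by_cases hx : IsUnit x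
  · obtain ⟨v, rfl⟩ := hx
    rw [← Units.val_mul, Ring.inverse_unit, Ring.inverse_unit, _root_.mul_inv_rev, Units.val_mul]
  · rw [Ring.inverse_non_unit _ hx, Ring.inverse_non_unit _ (mt (Units.isUnit_mul_units x u).1 hx),
      mul_zero]

theorem Matrix.mul_eq_zero_of_forall_mulVec_eq_self {R n : Type*} [Semiring R] [Fintype n]
    {M P : Matrix n n R} (hP : IsIdempotentElem P) (h : ∀ v, P *ᵥ v = v → M *ᵥ v = 0) :
    M * P = 0 :=
  ext_iff_mulVec.2 fun v ↦ by
    rw [← mulVec_mulVec, zero_mulVec, h _ (by rw [mulVec_mulVec, hP.eq])]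

theorem Matrix.hasDerivAt_iff_forall_apply {𝕜 : Type*} [NontriviallyNormedField 𝕜] {m n : Type*}
    [Fintype m] [Fintype n] {f : 𝕜 → Matrix m n 𝕜} {f' : Matrix m n 𝕜} {z : 𝕜} :
    HasDerivAt f f' z ↔ ∀ i j, HasDerivAt (fun w ↦ f w i j) (f' i j) z :=
  hasDerivAt_pi.trans (forall_congr' fun _ ↦ hasDerivAt_pi)

section L2Operator

open scoped Matrix.Norms.L2Operator

theorem Matrix.analyticAt_iff_forall_apply {𝕜 : Type*} [RCLike 𝕜] {m n : Type*} [Fintype m]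
    [Fintype n] [DecidableEq n] {f : 𝕜 → Matrix m n 𝕜} {z : 𝕜} :
    AnalyticAt 𝕜 f z ↔ ∀ i j, AnalyticAt 𝕜 (fun w ↦ f w i j) z := by
  let e : Matrix m n 𝕜 ≃L[𝕜] (m → n → 𝕜) :=
    (Matrix.ofLinearEquiv 𝕜).symm.toContinuousLinearEquiv
  have he : AnalyticAt 𝕜 f z ↔ AnalyticAt 𝕜 (fun w i j ↦ e (f w) i j) z :=
    ⟨fun h ↦ (e.toContinuousLinearMap.analyticAt _).comp h,
      fun h ↦ (e.symm.toContinuousLinearMap.analyticAt _).comp h⟩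
  simp only [he, analyticAt_pi_iff]
  rfl

end L2Operator

section NormedAlgebra

variable {𝕜 A : Type*} [NontriviallyNormedField 𝕜] [NormedRing A] [NormedAlgebra 𝕜 A]
  {f : 𝕜 → A} {P : A} {a z : 𝕜}

/-- The continuation across `a` of `z ↦ f z * ((z - a)⁻¹ • P + (1 - P))` when `f a * P = 0`. -/
noncomputable def dslopeProj (f : 𝕜 → A) (P : A) (a z : 𝕜) : A :=
  dslope f a z * P + f z * (1 - P)

theorem HasDerivAt.dslopeProj_self {f' : A} (hf : HasDerivAt f f' a) :
    dslopeProj f P a a = f' * P + f a * (1 - P) := by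
  rw [dslopeProj, dslope_same, hf.deriv]

theorem mul_smul_add_one_sub_eq_dslopeProj (hfa : f a * P = 0) (hz : z ≠ a) :
    f z * ((z - a)⁻¹ • P + (1 - P)) = dslopeProj f P a z := by
  have hfP : f z * P = (z - a) • (dslope f a z * P) := by
    rw [← smul_mul_assoc, sub_smul_dslope, sub_mul, hfa, sub_zero]
  rw [mul_add, mul_smul_comm, hfP, inv_smul_smul₀ (sub_ne_zero.2 hz), dslopeProj]

theorem AnalyticAt.dslopeProj (ha : AnalyticAt 𝕜 f a) (hz : AnalyticAt 𝕜 f z) :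
    AnalyticAt 𝕜 (dslopeProj f P a) z :=
  ((ha.dslope hz).mul analyticAt_const).add (hz.mul analyticAt_const)

theorem eventually_analyticAt_and_mul_ringInverse_eq [CompleteSpace A] {W ζ : 𝕜 → A} {W' : A}
    (hW : AnalyticAt 𝕜 W a) (hW' : HasDerivAt W W' a) (hζ : AnalyticAt 𝕜 ζ a)
    (hP : IsIdempotentElem P) (hWP : W a * P = 0) (hZ : IsUnit (W' * P + W a * (1 - P)))
    (hζP : ζ a * P = 0) :
    ∀ᶠ z in 𝓝 a,
      AnalyticAt 𝕜 (fun w ↦ dslopeProj ζ P a w * Ring.inverse (dslopeProj W P a w)) z ∧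
      (z ≠ a → IsUnit (W z) ∧
        dslopeProj ζ P a z * Ring.inverse (dslopeProj W P a z) = ζ z * Ring.inverse (W z)) := by
  have hunit : ∀ᶠ z in 𝓝 a, IsUnit (dslopeProj W P a z) :=
    (hW.dslopeProj hW).continuousAt.eventually_mem <|
      Units.isOpen.mem_nhds (by rwa [hW'.dslopeProj_self])
  filter_upwards [hW.eventually_analyticAt, hζ.eventually_analyticAt, hunit] with z hWz hζz hAz
  refine ⟨(hζ.dslopeProj hζz).mul <|
    (analyticAt_inverse (𝕜 := 𝕜) hAz.unit).comp_of_eq (hW.dslopeProj hWz) hAz.unit_spec,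
    fun hza ↦ ?_⟩
  obtain ⟨B, hB⟩ := hP.isUnit_smul_add_one_sub (inv_ne_zero (sub_ne_zero.2 hza))
  rw [← mul_smul_add_one_sub_eq_dslopeProj hWP hza, ← hB] at hAz ⊢
  rw [← mul_smul_add_one_sub_eq_dslopeProj hζP hza, ← hB, Ring.inverse_mul_units, mul_assoc,
    Units.mul_inv_cancel_left]
  exact ⟨(Units.isUnit_mul_units _ B).1 hAz, rfl⟩

end NormedAlgebra

theorem zeta_W_inv_extends_analytically_general {N : ℕ} (lam0 : ℂ)
    (W ζ : ℂ → Matrix (Fin N) (Fin N) ℂ) (W' P : Matrix (Fin N) (Fin N) ℂ)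
    (hW : ∀ i j, AnalyticAt ℂ (fun z => W z i j) lam0)
    (hW' : ∀ i j, HasDerivAt (fun z => W z i j) (W' i j) lam0)
    (hP2 : P * P = P)
    (hPker : ∀ v : Fin N → ℂ, W lam0 *ᵥ v = 0 ↔ P *ᵥ v = v)
    (hZ : IsUnit (W' * P + W lam0 * (1 - P)))
    (hζ : ∀ i j, AnalyticAt ℂ (fun z => ζ z i j) lam0)
    (hζP : ζ lam0 * P = 0) :
    ∃ U : Set ℂ, IsOpen U ∧ lam0 ∈ U ∧
      ∃ H : ℂ → Matrix (Fin N) (Fin N) ℂ,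
        (∀ i j, ∀ z ∈ U, AnalyticAt ℂ (fun w => H w i j) z) ∧
        ∀ z ∈ U, z ≠ lam0 → IsUnit (W z) ∧ H z = ζ z * (W z)⁻¹ := by
  open scoped Matrix.Norms.L2Operator in (
  have hWP : W lam0 * P = 0 :=
    mul_eq_zero_of_forall_mulVec_eq_self hP2 fun v ↦ (hPker v).2
  obtain ⟨U, hU, hUo, hlam0U⟩ := eventually_nhds_iff.1 <|
    eventually_analyticAt_and_mul_ringInverse_eq (analyticAt_iff_forall_apply.2 hW)
      (hasDerivAt_iff_forall_apply.2 hW') (analyticAt_iff_forall_apply.2 hζ) hP2 hWP hZ hζP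
  refine ⟨U, hUo, hlam0U, _, fun i j z hz ↦ analyticAt_iff_forall_apply.1 (hU z hz).1 i j,
    fun z hz hne ↦ ?_⟩
  rw [nonsing_inv_eq_ringInverse]
  exact (hU z hz).2 hne)

/-- If `W` is analytic near `λ₀`, `P` is the orthogonal projector onto
`Ker W(λ₀)`, `Z = W'(λ₀)P + W(λ₀)(I-P)` is invertible, and `ζ` is analytic near `λ₀` with
`ζ(λ₀)P = 0`, then `ζ(λ)W(λ)⁻¹` extends analytically across `λ₀` (and `W(λ)` is invertible
for `λ ≠ λ₀` near `λ₀`). -/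
theorem zeta_W_inv_extends_analytically {N : ℕ} (hN : 1 ≤ N) (lam0 : ℂ)
    (W ζ : ℂ → Matrix (Fin N) (Fin N) ℂ) (W' P : Matrix (Fin N) (Fin N) ℂ)
    (hW : ∀ i j, AnalyticAt ℂ (fun z => W z i j) lam0)
    (hW' : ∀ i j, HasDerivAt (fun z => W z i j) (W' i j) lam0)
    (hPH : Pᴴ = P) (hP2 : P * P = P)
    (hPker : ∀ v : Fin N → ℂ, W lam0 *ᵥ v = 0 ↔ P *ᵥ v = v)
    (hZ : IsUnit (W' * P + W lam0 * (1 - P)))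
    (hζ : ∀ i j, AnalyticAt ℂ (fun z => ζ z i j) lam0)
    (hζP : ζ lam0 * P = 0) :
    ∃ U : Set ℂ, IsOpen U ∧ lam0 ∈ U ∧
      ∃ H : ℂ → Matrix (Fin N) (Fin N) ℂ,
        (∀ i j, ∀ z ∈ U, AnalyticAt ℂ (fun w => H w i j) z) ∧
        ∀ z ∈ U, z ≠ lam0 → IsUnit (W z) ∧ H z = ζ z * (W z)⁻¹ :=
  zeta_W_inv_extends_analytically_general lam0 W ζ W' P hW hW' hP2 hPker hZ hζ hζP
end

section
/- Let λ₀ ∈ ℝ. Suppose F : ℝ → ℂ^{N×N} is twice continuously differentiable on [0,1], satisfies −F'' + V(x)F = λ₀F on [0,1], F(0) = T₋^⊥ and F'(0) = T₋ + aT₋^⊥; and suppose G : ℝ → ℂ^{N×N} is twice continuously differentiable on [0,1], satisfies −G'' + V(x)G = λ₀G + F on [0,1] with G(0) = G'(0) = 0. Let P be the orthogonal projector onto Ker(Γ₊F) = {h ∈ ℂ^N : (Γ₊F)·h = 0}. Then the matrix Z = (Γ₊G)·P + (Γ₊F)·(I − P) is invertible. -/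
/-!
Suppose `Z v = 0` and put `h = P v`, `k = (I - P) v`, so that `Γ₊F h = 0` and
`Γ₊G h = -Γ₊F k`. Under the self-adjoint boundary conditions the boundary map
`(f, f') ↦ (Γ₊°f, Γ₊f)` preserves the Wronskian `W(f, g) = fᴴ g' - f'ᴴ g`, and by Green's
identity `W(F, F)` is constant while `W(F, G)' = -FᴴF`. As `W(F, F)(0) = 0` and `W(F, G)(0) = 0`,
`-∫₀¹ |F h|² = hᴴ W(F, G)(1) h = -(Γ₊°F h)ᴴ Γ₊F k = -hᴴ W(F, F)(1) k = 0`.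
Hence `F h` vanishes on `[0, 1]`, so `F(0) h = F'(0) h = 0`, which forces `h = 0`. Then
`Γ₊F k = 0`, i.e. `k ∈ ran P`, while `P k = 0`; so `v = 0`.
-/

open Matrix Set MeasureTheory

section Calculus

variable {m n : Type*} [Fintype n]

theorem HasDerivAt.dotProduct {u w : ℝ → n → ℂ} {u' w' : n → ℂ} {x : ℝ}
    (hu : HasDerivAt u u' x) (hw : HasDerivAt w w' x) :
    HasDerivAt (fun t => u t ⬝ᵥ w t) (u' ⬝ᵥ w x + u x ⬝ᵥ w') x := by
  simp only [_root_.dotProduct, ← Finset.sum_add_distrib]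
  exact HasDerivAt.fun_sum fun i _ => (hasDerivAt_pi.mp hu i).mul (hasDerivAt_pi.mp hw i)

theorem ContinuousOn.dotProduct {α R : Type*} [TopologicalSpace α] [TopologicalSpace R]
    [NonUnitalNonAssocSemiring R] [IsTopologicalSemiring R] {u w : α → n → R} {s : Set α}
    (hu : ContinuousOn u s) (hw : ContinuousOn w s) : ContinuousOn (fun t => u t ⬝ᵥ w t) s :=
  (continuous_fst.dotProduct continuous_snd).comp_continuousOn (hu.prodMk hw)

theorem hasDerivAt_mulVec_of_entries {A : ℝ → Matrix m n ℂ} {A' : Matrix m n ℂ} {x : ℝ}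
    (hA : ∀ i j, HasDerivAt (fun t => A t i j) (A' i j) x) (h : n → ℂ) :
    HasDerivAt (fun t => A t *ᵥ h) (A' *ᵥ h) x :=
  hasDerivAt_pi.mpr fun i => HasDerivAt.fun_sum fun j _ => (hA i j).mul_const (h j)

theorem HasDerivAt.eq_zero_of_eqOn_Icc {E : Type*} [NormedAddCommGroup E] [NormedSpace ℝ E]
    {u : ℝ → E} {u' : E} {a b : ℝ} (hab : a < b) (hu : EqOn u 0 (Icc a b))
    (hd : HasDerivAt u u' a) : u' = 0 :=
  (uniqueDiffOn_Icc hab a (left_mem_Icc.mpr hab.le)).eq_deriv _ hd.hasDerivWithinAt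
    ((hasDerivWithinAt_const a _ 0).congr hu (hu (left_mem_Icc.mpr hab.le)))

open ComplexOrder in
theorem eqOn_zero_of_integral_star_dotProduct_self_eq_zero {u : ℝ → n → ℂ} {a b : ℝ}
    (hab : a < b) (hu : ContinuousOn u (Icc a b))
    (h : ∫ t in a..b, star (u t) ⬝ᵥ u t = 0) : EqOn u 0 (Icc a b) := by
  set q : ℝ → ℝ := fun t => (star (u t) ⬝ᵥ u t).re
  have hq (t : ℝ) : (q t : ℂ) = star (u t) ⬝ᵥ u t :=
    (Complex.eq_re_of_ofReal_le (dotProduct_star_self_nonneg (u t))).symm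
  have hqc : ContinuousOn q (Icc a b) :=
    Complex.continuous_re.comp_continuousOn (hu.star.dotProduct hu)
  have hq0 : ∫ t in a..b, q t = 0 := by
    simpa only [← hq, intervalIntegral.integral_ofReal, Complex.ofReal_eq_zero] using h
  have hae : q =ᵐ[volume.restrict (Icc a b)] 0 := by
    rw [Measure.restrict_congr_set Ioc_ae_eq_Icc.symm]
    refine (intervalIntegral.integral_eq_zero_iff_of_le_of_nonneg_ae hab.le ?_
      (hqc.intervalIntegrable_of_Icc hab.le)).mp hq0
    exact ae_of_all _ fun t => (Complex.nonneg_iff.mp (dotProduct_star_self_nonneg (u t))).1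
  intro t ht
  rw [Pi.zero_apply, ← dotProduct_star_self_eq_zero, ← hq,
    Measure.eqOn_Icc_of_ae_eq volume hab.ne hae hqc continuousOn_const ht, Pi.zero_apply,
    Complex.ofReal_zero]

end Calculus

section Schrodinger

variable {n : Type*} [Fintype n] (V : ℝ → Matrix n n ℂ) (μ : ℝ)

def SolvesSchrodingerOn (c : ℝ → n → ℂ) (s : Set ℝ) (u u' u'' : ℝ → n → ℂ) : Prop :=
  ∀ x ∈ s, HasDerivAt u (u' x) x ∧ HasDerivAt u' (u'' x) x ∧
    -u'' x + V x *ᵥ u x = (μ : ℂ) • u x + c x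

variable {V μ} {s : Set ℝ}

theorem SolvesSchrodingerOn.continuousOn {c u u' u'' : ℝ → n → ℂ}
    (hu : SolvesSchrodingerOn V μ c s u u' u'') : ContinuousOn u s :=
  fun x hx => (hu x hx).1.continuousAt.continuousWithinAt

theorem solvesSchrodingerOn_mulVec {F F' F'' C : ℝ → Matrix n n ℂ}
    (hF' : ∀ x ∈ s, ∀ i j, HasDerivAt (fun t => F t i j) (F' x i j) x)
    (hF'' : ∀ x ∈ s, ∀ i j, HasDerivAt (fun t => F' t i j) (F'' x i j) x)
    (hF : ∀ x ∈ s, -F'' x + V x * F x = (μ : ℂ) • F x + C x) (h : n → ℂ) :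
    SolvesSchrodingerOn V μ (C · *ᵥ h) s (F · *ᵥ h) (F' · *ᵥ h) (F'' · *ᵥ h) := fun x hx =>
  ⟨hasDerivAt_mulVec_of_entries (hF' x hx) h, hasDerivAt_mulVec_of_entries (hF'' x hx) h, by
    simpa only [add_mulVec, neg_mulVec, ← mulVec_mulVec, smul_mulVec] using
      congrArg (· *ᵥ h) (hF x hx)⟩

theorem SolvesSchrodingerOn.hasDerivAt_wronskian {c d u u' u'' w w' w'' : ℝ → n → ℂ} {x : ℝ}
    (hV : (V x)ᴴ = V x) (hu : SolvesSchrodingerOn V μ d s u u' u'')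
    (hw : SolvesSchrodingerOn V μ c s w w' w'') (hx : x ∈ s) :
    HasDerivAt (fun t => star (u t) ⬝ᵥ w' t - star (u' t) ⬝ᵥ w t)
      (star (d x) ⬝ᵥ w x - star (u x) ⬝ᵥ c x) x := by
  obtain ⟨hu₁, hu₂, hu_eq⟩ := hu x hx
  obtain ⟨hw₁, hw₂, hw_eq⟩ := hw x hx
  refine ((hu₁.star.dotProduct hw₂).sub (hu₂.star.dotProduct hw₁)).congr_deriv ?_
  rw [show u'' x = V x *ᵥ u x - ((μ : ℂ) • u x + d x) by rw [← hu_eq]; abel,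
    show w'' x = V x *ᵥ w x - ((μ : ℂ) • w x + c x) by rw [← hw_eq]; abel]
  simp only [dotProduct_sub, sub_dotProduct, dotProduct_add, add_dotProduct, star_sub, star_add,
    star_smul, dotProduct_smul, smul_dotProduct, Complex.star_def, Complex.conj_ofReal, star_mulVec,
    hV, ← dotProduct_mulVec, smul_eq_mul]
  ring

theorem SolvesSchrodingerOn.wronskian_sub_eq_integral {c d u u' u'' w w' w'' : ℝ → n → ℂ}
    {a b : ℝ} (hab : a ≤ b) (hV : ∀ x ∈ Icc a b, (V x)ᴴ = V x)
    (hu : SolvesSchrodingerOn V μ d (Icc a b) u u' u'')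
    (hw : SolvesSchrodingerOn V μ c (Icc a b) w w' w'')
    (hd : ContinuousOn d (Icc a b)) (hc : ContinuousOn c (Icc a b)) :
    (star (u b) ⬝ᵥ w' b - star (u' b) ⬝ᵥ w b) - (star (u a) ⬝ᵥ w' a - star (u' a) ⬝ᵥ w a) =
      ∫ t in a..b, (star (d t) ⬝ᵥ w t - star (u t) ⬝ᵥ c t) := by
  rw [intervalIntegral.integral_eq_sub_of_hasDerivAt]
  · rw [uIcc_of_le hab]
    exact fun x hx => hu.hasDerivAt_wronskian (hV x hx) hw hx
  · exact ((hd.star.dotProduct hw.continuousOn).sub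
      (hu.continuousOn.star.dotProduct hc)).intervalIntegrable_of_Icc hab

end Schrodinger

section Wronskian

variable {n R : Type*} [Fintype n] [CommRing R] [StarRing R]

def wronskian (f f' g g' : Matrix n n R) : Matrix n n R := fᴴ * g' - f'ᴴ * g

theorem star_dotProduct_wronskian_mulVec (f f' g g' : Matrix n n R) (h k : n → R) :
    star h ⬝ᵥ (wronskian f f' g g' *ᵥ k) =
      star (f *ᵥ h) ⬝ᵥ (g' *ᵥ k) - star (f' *ᵥ h) ⬝ᵥ (g *ᵥ k) := by
  simp only [wronskian, sub_mulVec, dotProduct_sub, star_mulVec, dotProduct_mulVec, vecMul_vecMul]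

variable [DecidableEq n] {T : Matrix n n R}

/-- `boundaryValue T b f f'` is `Γ₊f` and `dualBoundaryValue T f f'` is `Γ₊°f` when `f`, `f'` are
the values of a function and of its derivative at the endpoint `1`. -/
def boundaryValue (T b f f' : Matrix n n R) : Matrix n n R := (1 - T) * (f' + b * f) - T * f

def dualBoundaryValue (T f f' : Matrix n n R) : Matrix n n R := (1 - T) * f + T * f'

theorem wronskian_initial_eq_zero {a : Matrix n n R} (hTH : Tᴴ = T) (hT2 : T * T = T)
    (haH : aᴴ = a) :
    wronskian (1 - T) (T + a * (1 - T)) (1 - T) (T + a * (1 - T)) = 0 := by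
  have hQT : (1 - T) * T = 0 := by rw [Matrix.sub_mul, hT2, Matrix.one_mul, sub_self]
  have hTQ : T * (1 - T) = 0 := by rw [Matrix.mul_sub, hT2, Matrix.mul_one, sub_self]
  simp only [wronskian, conjTranspose_sub, conjTranspose_add, conjTranspose_mul, conjTranspose_one,
    hTH, haH, Matrix.mul_add, Matrix.add_mul, ← Matrix.mul_assoc, hQT, hTQ, zero_add, sub_self]

theorem wronskian_dualBoundaryValue_boundaryValue {b : Matrix n n R} (hTH : Tᴴ = T)
    (hT2 : T * T = T) (hbH : bᴴ = b) (hb : b = (1 - T) * b * (1 - T)) (f f' g g' : Matrix n n R) :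
    wronskian (dualBoundaryValue T f f') (boundaryValue T b f f')
      (dualBoundaryValue T g g') (boundaryValue T b g g') = wronskian f f' g g' := by
  have hQT : (1 - T) * T = 0 := by rw [Matrix.sub_mul, hT2, Matrix.one_mul, sub_self]
  have hTQ : T * (1 - T) = 0 := by rw [Matrix.mul_sub, hT2, Matrix.mul_one, sub_self]
  have hTb : T * b = 0 := by
    rw [hb, ← Matrix.mul_assoc, ← Matrix.mul_assoc, hTQ, Matrix.zero_mul, Matrix.zero_mul]
  have hbT : b * T = 0 := by rw [hb, Matrix.mul_assoc, hQT, Matrix.mul_zero]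
  have hTT (X : Matrix n n R) : T * (T * X) = T * X := by rw [← Matrix.mul_assoc, hT2]
  have hTbX (X : Matrix n n R) : T * (b * X) = 0 := by rw [← Matrix.mul_assoc, hTb, Matrix.zero_mul]
  have hbTX (X : Matrix n n R) : b * (T * X) = 0 := by rw [← Matrix.mul_assoc, hbT, Matrix.zero_mul]
  simp only [wronskian, boundaryValue, dualBoundaryValue, conjTranspose_sub, conjTranspose_add,
    conjTranspose_mul, hTH, hbH, Matrix.mul_add, Matrix.add_mul, Matrix.mul_sub,
    Matrix.sub_mul, Matrix.one_mul, Matrix.mul_assoc, hTT, hTbX, hbTX, Matrix.mul_zero,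
    conjTranspose_zero, Matrix.zero_mul]
  abel

end Wronskian

theorem isUnit_mul_add_mul_one_sub {K n : Type*} [Field K] [Fintype n] [DecidableEq n]
    {A B P : Matrix n n K} (hP : P * P = P) (hker : ∀ v, B *ᵥ v = 0 ↔ P *ᵥ v = v)
    (hAB : ∀ h k, B *ᵥ h = 0 → A *ᵥ h + B *ᵥ k = 0 → h = 0) :
    IsUnit (A * P + B * (1 - P)) := by
  refine mulVec_injective_iff_isUnit.mp <|
    (injective_iff_map_eq_zero (mulVecLin _)).mpr fun v hv => ?_
  have hsplit : A *ᵥ (P *ᵥ v) + B *ᵥ ((1 - P) *ᵥ v) = 0 := by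
    simpa only [mulVecLin_apply, mulVec_mulVec, ← add_mulVec] using hv
  have hPh : P *ᵥ (P *ᵥ v) = P *ᵥ v := by rw [mulVec_mulVec, hP]
  have hPk : P *ᵥ ((1 - P) *ᵥ v) = 0 := by
    rw [mulVec_mulVec, Matrix.mul_sub, Matrix.mul_one, hP, sub_self, zero_mulVec]
  have hh : P *ᵥ v = 0 := hAB _ _ ((hker _).mpr hPh) hsplit
  have hk : (1 - P) *ᵥ v = 0 := by
    have hBk : B *ᵥ ((1 - P) *ᵥ v) = 0 := by simpa only [hh, mulVec_zero, zero_add] using hsplit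
    rw [← (hker _).mp hBk, hPk]
  calc v = P *ᵥ v + (1 - P) *ᵥ v := by rw [← add_mulVec, add_sub_cancel, one_mulVec]
    _ = 0 := by rw [hh, hk, add_zero]

section BoundaryProblem

variable {n : Type*} [Fintype n] [DecidableEq n] {Tm Tp a b : Matrix n n ℂ}
  {V : ℝ → Matrix n n ℂ} {lam0 : ℝ} {F F' F'' G G' G'' : ℝ → Matrix n n ℂ}

theorem eq_zero_of_boundaryValue_mulVec_eq_zero
    (hTmH : Tmᴴ = Tm) (hTm2 : Tm * Tm = Tm) (hTpH : Tpᴴ = Tp) (hTp2 : Tp * Tp = Tp)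
    (haH : aᴴ = a) (hbH : bᴴ = b) (hb : b = (1 - Tp) * b * (1 - Tp))
    (hVh : ∀ x ∈ Icc (0:ℝ) 1, (V x)ᴴ = V x)
    (hF' : ∀ x ∈ Icc (0:ℝ) 1, ∀ i j, HasDerivAt (fun t => F t i j) (F' x i j) x)
    (hF'' : ∀ x ∈ Icc (0:ℝ) 1, ∀ i j, HasDerivAt (fun t => F' t i j) (F'' x i j) x)
    (hFeq : ∀ x ∈ Icc (0:ℝ) 1, -F'' x + V x * F x = (lam0 : ℂ) • F x)
    (hF0 : F 0 = 1 - Tm) (hF'0 : F' 0 = Tm + a * (1 - Tm))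
    (hG' : ∀ x ∈ Icc (0:ℝ) 1, ∀ i j, HasDerivAt (fun t => G t i j) (G' x i j) x)
    (hG'' : ∀ x ∈ Icc (0:ℝ) 1, ∀ i j, HasDerivAt (fun t => G' t i j) (G'' x i j) x)
    (hGeq : ∀ x ∈ Icc (0:ℝ) 1, -G'' x + V x * G x = (lam0 : ℂ) • G x + F x)
    (hG0 : G 0 = 0) (hG'0 : G' 0 = 0) {h k : n → ℂ}
    (hh : boundaryValue Tp b (F 1) (F' 1) *ᵥ h = 0)
    (hhk : boundaryValue Tp b (G 1) (G' 1) *ᵥ h + boundaryValue Tp b (F 1) (F' 1) *ᵥ k = 0) :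
    h = 0 := by
  have hFsol (v : n → ℂ) := solvesSchrodingerOn_mulVec (C := fun _ => 0) hF' hF''
    (fun x hx => by rw [add_zero]; exact hFeq x hx) v
  have hGsol := solvesSchrodingerOn_mulVec hG' hG'' hGeq h
  have hW := wronskian_dualBoundaryValue_boundaryValue hTpH hTp2 hbH hb
  have hWFF : star h ⬝ᵥ (wronskian (F 1) (F' 1) (F 1) (F' 1) *ᵥ k) = 0 := by
    have := (hFsol h).wronskian_sub_eq_integral zero_le_one hVh (hFsol k)
      continuousOn_const continuousOn_const
    simpa [← star_dotProduct_wronskian_mulVec, hF0, hF'0, wronskian_initial_eq_zero hTmH hTm2 haH]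
      using this
  have hWFG : star h ⬝ᵥ (wronskian (F 1) (F' 1) (G 1) (G' 1) *ᵥ h) =
      -∫ t in (0:ℝ)..1, star (F t *ᵥ h) ⬝ᵥ (F t *ᵥ h) := by
    have := (hFsol h).wronskian_sub_eq_integral zero_le_one hVh hGsol
      continuousOn_const (hFsol h).continuousOn
    simpa [← star_dotProduct_wronskian_mulVec, hG0, hG'0, intervalIntegral.integral_neg] using this
  have hWFG0 : star h ⬝ᵥ (wronskian (F 1) (F' 1) (G 1) (G' 1) *ᵥ h) = 0 :=
    calc _ = -(star h ⬝ᵥ (wronskian (F 1) (F' 1) (F 1) (F' 1) *ᵥ k)) := by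
          rw [← hW (F 1), ← hW (F 1), star_dotProduct_wronskian_mulVec,
            star_dotProduct_wronskian_mulVec, hh, eq_neg_of_add_eq_zero_left hhk]
          simp
      _ = 0 := by rw [hWFF, neg_zero]
  have hFh : EqOn (F · *ᵥ h) 0 (Icc 0 1) :=
    eqOn_zero_of_integral_star_dotProduct_self_eq_zero zero_lt_one (hFsol h).continuousOn
      (neg_eq_zero.mp (hWFG.symm.trans hWFG0))
  have hF'h : F' 0 *ᵥ h = 0 :=
    ((hFsol h) 0 (left_mem_Icc.mpr zero_le_one)).1.eq_zero_of_eqOn_Icc zero_lt_one hFh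
  have hTmh : (1 - Tm) *ᵥ h = 0 := hF0 ▸ hFh (left_mem_Icc.mpr zero_le_one)
  calc h = (Tm + a * (1 - Tm)) *ᵥ h := by
        rw [add_mulVec, ← mulVec_mulVec, hTmh, mulVec_zero, add_zero, ← sub_eq_zero, ← hTmh,
          sub_mulVec, one_mulVec]
    _ = 0 := hF'0 ▸ hF'h

end BoundaryProblem

theorem Z_matrix_invertible_general {N : ℕ}
    (Tm Tp a b : Matrix (Fin N) (Fin N) ℂ)
    (hTmH : Tmᴴ = Tm) (hTm2 : Tm * Tm = Tm) (hTpH : Tpᴴ = Tp) (hTp2 : Tp * Tp = Tp)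
    (haH : aᴴ = a)
    (hbH : bᴴ = b) (hb : b = (1 - Tp) * b * (1 - Tp))
    (V : ℝ → Matrix (Fin N) (Fin N) ℂ)
    (hVh : ∀ x ∈ Icc (0:ℝ) 1, (V x)ᴴ = V x)
    (lam0 : ℝ)
    (F F' F'' G G' G'' : ℝ → Matrix (Fin N) (Fin N) ℂ)
    (hF' : ∀ x ∈ Icc (0:ℝ) 1, ∀ i j, HasDerivAt (fun t => F t i j) (F' x i j) x)
    (hF'' : ∀ x ∈ Icc (0:ℝ) 1, ∀ i j, HasDerivAt (fun t => F' t i j) (F'' x i j) x)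
    (hFeq : ∀ x ∈ Icc (0:ℝ) 1, -F'' x + V x * F x = (lam0 : ℂ) • F x)
    (hF0 : F 0 = 1 - Tm) (hF'0 : F' 0 = Tm + a * (1 - Tm))
    (hG' : ∀ x ∈ Icc (0:ℝ) 1, ∀ i j, HasDerivAt (fun t => G t i j) (G' x i j) x)
    (hG'' : ∀ x ∈ Icc (0:ℝ) 1, ∀ i j, HasDerivAt (fun t => G' t i j) (G'' x i j) x)
    (hGeq : ∀ x ∈ Icc (0:ℝ) 1, -G'' x + V x * G x = (lam0 : ℂ) • G x + F x)
    (hG0 : G 0 = 0) (hG'0 : G' 0 = 0)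
    (P : Matrix (Fin N) (Fin N) ℂ) (hP2 : P * P = P)
    (hPker : ∀ v : Fin N → ℂ,
      ((1 - Tp) * (F' 1 + b * F 1) - Tp * F 1) *ᵥ v = 0 ↔ P *ᵥ v = v) :
    IsUnit (((1 - Tp) * (G' 1 + b * G 1) - Tp * G 1) * P +
      ((1 - Tp) * (F' 1 + b * F 1) - Tp * F 1) * (1 - P)) :=
  isUnit_mul_add_mul_one_sub hP2 hPker fun _ _ =>
    eq_zero_of_boundaryValue_mulVec_eq_zero hTmH hTm2 hTpH hTp2 haH hbH hb hVh hF' hF'' hFeq hF0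
      hF'0 hG' hG'' hGeq hG0 hG'0

/-- With `F` the fundamental solution at `λ₀` (boundary data at `0`),
`G = ∂F/∂λ`, and `P` the orthogonal projector onto `Ker(Γ₊F)`, the matrix
`Z = (Γ₊G)P + (Γ₊F)(I-P)` is invertible. -/
theorem Z_matrix_invertible {N : ℕ} (hN : 1 ≤ N)
    (Tm Tp a b : Matrix (Fin N) (Fin N) ℂ)
    (hTmH : Tmᴴ = Tm) (hTm2 : Tm * Tm = Tm) (hTpH : Tpᴴ = Tp) (hTp2 : Tp * Tp = Tp)
    (haH : aᴴ = a) (ha : a = (1 - Tm) * a * (1 - Tm))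
    (hbH : bᴴ = b) (hb : b = (1 - Tp) * b * (1 - Tp))
    (V : ℝ → Matrix (Fin N) (Fin N) ℂ)
    (hVc : ∀ i j, Continuous fun x => V x i j)
    (hVh : ∀ x ∈ Icc (0:ℝ) 1, (V x)ᴴ = V x)
    (lam0 : ℝ)
    (F F' F'' G G' G'' : ℝ → Matrix (Fin N) (Fin N) ℂ)
    (hF' : ∀ x ∈ Icc (0:ℝ) 1, ∀ i j, HasDerivAt (fun t => F t i j) (F' x i j) x)
    (hF'' : ∀ x ∈ Icc (0:ℝ) 1, ∀ i j, HasDerivAt (fun t => F' t i j) (F'' x i j) x)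
    (hF''c : ∀ i j, ContinuousOn (fun x => F'' x i j) (Icc (0:ℝ) 1))
    (hFeq : ∀ x ∈ Icc (0:ℝ) 1, -F'' x + V x * F x = (lam0 : ℂ) • F x)
    (hF0 : F 0 = 1 - Tm) (hF'0 : F' 0 = Tm + a * (1 - Tm))
    (hG' : ∀ x ∈ Icc (0:ℝ) 1, ∀ i j, HasDerivAt (fun t => G t i j) (G' x i j) x)
    (hG'' : ∀ x ∈ Icc (0:ℝ) 1, ∀ i j, HasDerivAt (fun t => G' t i j) (G'' x i j) x)
    (hG''c : ∀ i j, ContinuousOn (fun x => G'' x i j) (Icc (0:ℝ) 1))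
    (hGeq : ∀ x ∈ Icc (0:ℝ) 1, -G'' x + V x * G x = (lam0 : ℂ) • G x + F x)
    (hG0 : G 0 = 0) (hG'0 : G' 0 = 0)
    (P : Matrix (Fin N) (Fin N) ℂ) (hPH : Pᴴ = P) (hP2 : P * P = P)
    (hPker : ∀ v : Fin N → ℂ,
      ((1 - Tp) * (F' 1 + b * F 1) - Tp * F 1) *ᵥ v = 0 ↔ P *ᵥ v = v) :
    IsUnit (((1 - Tp) * (G' 1 + b * G 1) - Tp * G 1) * P +
      ((1 - Tp) * (F' 1 + b * F 1) - Tp * F 1) * (1 - P)) :=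
  Z_matrix_invertible_general Tm Tp a b hTmH hTm2 hTpH hTp2 haH hbH hb V hVh lam0 F F' F'' G G' G''
    hF' hF'' hFeq hF0 hF'0 hG' hG'' hGeq hG0 hG'0 P hP2 hPker
end

section
/- Let λ₀ ∈ ℝ. Suppose F₋, F₊ : ℝ → ℂ^{N×N} are twice continuously differentiable on [0,1] and satisfy −F'' + V(x)F = λ₀F on [0,1], with F₋(0) = T₋^⊥, F₋'(0) = T₋ + aT₋^⊥, F₊(1) = T₊^⊥, F₊'(1) = T₊ − bT₊^⊥. Set E = Ker(Γ₊F₋) = {h : (Γ₊F₋)·h = 0} and E^♯ = Ker(Γ₋F₊) = {h : (Γ₋F₊)·h = 0}. Then: (Γ₊°F₋)·h ∈ E^♯ for every h ∈ E; (Γ₋°F₊)·h ∈ E for every h ∈ E^♯; (Γ₋°F₊)·(Γ₊°F₋)·h = h for every h ∈ E; and (Γ₊°F₋)·(Γ₋°F₊)·h = h for every h ∈ E^♯. In other words, Γ₊°F₋ maps E into E^♯, Γ₋°F₊ maps E^♯ into E, and these maps are mutually inverse bijections. -/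
/-!
Put `y = Γ₊°F₋ h`. The Cauchy data `(T₊^⊥, T₊ - b T₊^⊥)` of `F₊` at `1` invert `(Γ₊, Γ₊°)`:
every pair `(Y, Y')` equals `(F₊(1) Γ₊° - T₊ Γ₊, F₊'(1) Γ₊° + T₊^⊥ Γ₊)` evaluated at `(Y, Y')`.
Hence `Γ₊F₋ h = 0` says that the solutions `F₋ h` and `F₊ y` have the same Cauchy data at `1`,
so by uniqueness for the linear ODE they coincide on `[0,1]`. At `0` the normalization of `F₋`
gives `Γ₋F₊ y = Γ₋F₋ h = 0` and `Γ₋°F₊ y = Γ₋°F₋ h = h`. The other two claims are the same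
argument with the endpoints exchanged.
-/

open Matrix Set
open scoped NNReal

/-- The boundary condition `proj ψ = 0`, `(1 - proj)(ψ' + coeff ψ) = 0`. In the paper's notation
`trace` and `cotrace` are `Γ` and `Γ°` evaluated on the Cauchy data `(ψ, ψ')` at an endpoint:
`Γ₊` is the case `(T₊, b)` and `Γ₋` the case `(T₋, -a)`. -/
structure BoundaryCondition (R : Type*) [Ring R] where
  proj : R
  coeff : R
  isIdempotentElem_proj : IsIdempotentElem proj
  proj_mul_coeff : proj * coeff = 0
  coeff_mul_proj : coeff * proj = 0

namespace BoundaryCondition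

section Ring

variable {R : Type*} [Ring R]

def ofEqCompl (T c : R) (hT : IsIdempotentElem T) (hc : c = (1 - T) * c * (1 - T)) :
    BoundaryCondition R where
  proj := T
  coeff := c
  isIdempotentElem_proj := hT
  proj_mul_coeff := by rw [hc, ← mul_assoc, ← mul_assoc, hT.mul_one_sub_self, zero_mul, zero_mul]
  coeff_mul_proj := by rw [hc, mul_assoc, hT.one_sub_mul_self, mul_zero]

variable (β : BoundaryCondition R)

def trace (Y Y' : R) : R := (1 - β.proj) * (Y' + β.coeff * Y) - β.proj * Y

def cotrace (Y Y' : R) : R := (1 - β.proj) * Y + β.proj * Y'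

def IsNormalized (Y Y' : R) : Prop := Y = 1 - β.proj ∧ Y' = β.proj - β.coeff * (1 - β.proj)

variable {β}

theorem proj_mul_proj_mul (X : R) : β.proj * (β.proj * X) = β.proj * X := by
  rw [← mul_assoc, β.isIdempotentElem_proj.eq]

theorem proj_mul_coeff_mul (X : R) : β.proj * (β.coeff * X) = 0 := by
  rw [← mul_assoc, β.proj_mul_coeff, zero_mul]

theorem coeff_mul_proj_mul (X : R) : β.coeff * (β.proj * X) = 0 := by
  rw [← mul_assoc, β.coeff_mul_proj, zero_mul]

theorem trace_eq_zero_of_isNormalized {Y Y' : R} (h : β.IsNormalized Y Y') :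
    β.trace Y Y' = 0 := by
  obtain ⟨rfl, rfl⟩ := h
  simp only [trace, mul_add, mul_sub, sub_mul, one_mul, mul_one, β.isIdempotentElem_proj.eq,
    β.proj_mul_coeff, β.coeff_mul_proj, mul_zero]
  abel

theorem cotrace_eq_one_of_isNormalized {Y Y' : R} (h : β.IsNormalized Y Y') :
    β.cotrace Y Y' = 1 := by
  obtain ⟨rfl, rfl⟩ := h
  simp only [cotrace, mul_sub, sub_mul, one_mul, mul_one, β.isIdempotentElem_proj.eq,
    β.proj_mul_coeff, β.coeff_mul_proj, mul_zero]
  abel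

theorem eq_mul_cotrace_of_isNormalized {Z Z' : R} (hZ : β.IsNormalized Z Z') (Y Y' : R) :
    Y = Z * β.cotrace Y Y' - β.proj * β.trace Y Y' ∧
      Y' = Z' * β.cotrace Y Y' + (1 - β.proj) * β.trace Y Y' := by
  obtain ⟨rfl, rfl⟩ := hZ
  constructor <;>
  simp only [trace, cotrace, mul_add, mul_sub, sub_mul, one_mul, mul_one, proj_mul_proj_mul,
    proj_mul_coeff_mul, β.coeff_mul_proj, coeff_mul_proj_mul, zero_mul, mul_zero] <;>
  abel

end Ring

section Matrix

variable {n R : Type*} [Fintype n] [DecidableEq n] [Ring R] {β : BoundaryCondition (Matrix n n R)}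
  {Y Y' Z Z' : Matrix n n R} {v w : n → R}

theorem trace_mulVec_congr (h : Y *ᵥ v = Z *ᵥ w) (h' : Y' *ᵥ v = Z' *ᵥ w) :
    β.trace Y Y' *ᵥ v = β.trace Z Z' *ᵥ w ∧ β.cotrace Y Y' *ᵥ v = β.cotrace Z Z' *ᵥ w := by
  constructor <;>
  simp only [trace, cotrace, sub_mulVec, add_mulVec, ← mulVec_mulVec, mulVec_add, h, h']

theorem mulVec_eq_of_trace_mulVec_eq_zero (hZ : β.IsNormalized Z Z')
    (hv : β.trace Y Y' *ᵥ v = 0) :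
    Y *ᵥ v = Z *ᵥ (β.cotrace Y Y' *ᵥ v) ∧ Y' *ᵥ v = Z' *ᵥ (β.cotrace Y Y' *ᵥ v) := by
  obtain ⟨hY, hY'⟩ := eq_mul_cotrace_of_isNormalized hZ Y Y'
  constructor
  · calc Y *ᵥ v = (Z * β.cotrace Y Y' - β.proj * β.trace Y Y') *ᵥ v := by rw [← hY]
      _ = Z *ᵥ (β.cotrace Y Y' *ᵥ v) := by
        rw [sub_mulVec, ← mulVec_mulVec, ← mulVec_mulVec, hv, mulVec_zero, sub_zero]
  · calc Y' *ᵥ v = (Z' * β.cotrace Y Y' + (1 - β.proj) * β.trace Y Y') *ᵥ v := by rw [← hY']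
      _ = Z' *ᵥ (β.cotrace Y Y' *ᵥ v) := by
        rw [add_mulVec, ← mulVec_mulVec, ← mulVec_mulVec, hv, mulVec_zero, add_zero]

end Matrix

end BoundaryCondition

theorem ODE_secondOrder_solution_unique_of_mem_Icc {E : Type*} [NormedAddCommGroup E]
    [NormedSpace ℝ E] {A : ℝ → E → E} {K : ℝ≥0} {f f' g g' : ℝ → E} {a b t₀ : ℝ}
    (hA : ∀ t ∈ Icc a b, LipschitzWith K (A t))
    (hf : ∀ t ∈ Icc a b, HasDerivAt f (f' t) t ∧ HasDerivAt f' (A t (f t)) t)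
    (hg : ∀ t ∈ Icc a b, HasDerivAt g (g' t) t ∧ HasDerivAt g' (A t (g t)) t)
    (ht₀ : t₀ ∈ Icc a b) (h₀ : f t₀ = g t₀) (h₀' : f' t₀ = g' t₀) :
    ∀ t ∈ Icc a b, f t = g t ∧ f' t = g' t := by
  set v : ℝ → E × E → E × E := fun t p => (p.2, A t p.1)
  have hv : ∀ t ∈ Icc a b, LipschitzWith (max 1 (K * 1)) (v t) := fun t ht =>
    LipschitzWith.prod_snd.prodMk ((hA t ht).comp LipschitzWith.prod_fst)
  have hF : ∀ t ∈ Icc a b, HasDerivAt (fun t => (f t, f' t)) (v t (f t, f' t)) t :=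
    fun t ht => (hf t ht).1.prodMk (hf t ht).2
  have hG : ∀ t ∈ Icc a b, HasDerivAt (fun t => (g t, g' t)) (v t (g t, g' t)) t :=
    fun t ht => (hg t ht).1.prodMk (hg t ht).2
  have hcont : ∀ {F F' : ℝ → E × E}, (∀ t ∈ Icc a b, HasDerivAt F (F' t) t) →
      ∀ {c d}, Icc c d ⊆ Icc a b → ContinuousOn F (Icc c d) := fun hF _ _ hs t ht =>
    (hF t (hs ht)).continuousAt.continuousWithinAt
  have hsplit : Icc a b = Icc a t₀ ∪ Icc t₀ b := (Icc_union_Icc_eq_Icc ht₀.1 ht₀.2).symm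
  have hleft : Icc a t₀ ⊆ Icc a b := hsplit ▸ subset_union_left
  have hright : Icc t₀ b ⊆ Icc a b := hsplit ▸ subset_union_right
  have heq : EqOn (fun t => (f t, f' t)) (fun t => (g t, g' t)) (Icc a b) := by
    rw [hsplit]
    refine EqOn.union ?_ ?_
    · exact ODE_solution_unique_of_mem_Icc_left (s := fun _ => univ)
        (fun t ht => (hv t (hleft (Ioc_subset_Icc_self ht))).lipschitzOnWith) (hcont hF hleft)
        (fun t ht => (hF t (hleft (Ioc_subset_Icc_self ht))).hasDerivWithinAt)
        (fun _ _ => trivial) (hcont hG hleft)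
        (fun t ht => (hG t (hleft (Ioc_subset_Icc_self ht))).hasDerivWithinAt)
        (fun _ _ => trivial) (Prod.ext h₀ h₀')
    · exact ODE_solution_unique_of_mem_Icc_right (s := fun _ => univ)
        (fun t ht => (hv t (hright (Ico_subset_Icc_self ht))).lipschitzOnWith) (hcont hF hright)
        (fun t ht => (hF t (hright (Ico_subset_Icc_self ht))).hasDerivWithinAt)
        (fun _ _ => trivial) (hcont hG hright)
        (fun t ht => (hG t (hright (Ico_subset_Icc_self ht))).hasDerivWithinAt)
        (fun _ _ => trivial) (Prod.ext h₀ h₀')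
  exact fun t ht => Prod.ext_iff.1 (heq ht)

section MatrixODE

variable {𝕜 : Type*} [RCLike 𝕜] {n : Type*} [Fintype n]

theorem exists_lipschitzWith_mulVec {M : ℝ → Matrix n n 𝕜} {s : Set ℝ} (hs : IsCompact s)
    (hM : ContinuousOn M s) : ∃ K : ℝ≥0, ∀ t ∈ s, LipschitzWith K (M t *ᵥ ·) := by
  let _ := Matrix.linftyOpNormedAddCommGroup (m := n) (n := n) (α := 𝕜)
  obtain ⟨C, hC⟩ := hs.exists_bound_of_continuousOn hM
  exact ⟨C.toNNReal, fun t ht => AddMonoidHomClass.lipschitz_of_bound (M t).mulVecLin C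
    fun y => (linfty_opNorm_mulVec _ _).trans (by gcongr; exact hC t ht)⟩

theorem hasDerivAt_mulVec {F : ℝ → Matrix n n 𝕜} {D : Matrix n n 𝕜} {x : ℝ}
    (hF : ∀ i j, HasDerivAt (F · i j) (D i j) x) (v : n → 𝕜) :
    HasDerivAt (F · *ᵥ v) (D *ᵥ v) x :=
  hasDerivAt_pi.2 fun i => HasDerivAt.fun_sum fun j _ => (hF i j).mul_const (v j)

def IsMatrixSolution (M F F' : ℝ → Matrix n n 𝕜) (s : Set ℝ) : Prop :=
  ∀ x ∈ s, ∀ i j, HasDerivAt (F · i j) (F' x i j) x ∧ HasDerivAt (F' · i j) ((M x * F x) i j) x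

theorem isMatrixSolution_of_neg_add_mul_eq_smul [DecidableEq n] {V F F' F'' : ℝ → Matrix n n 𝕜}
    {c : 𝕜} {s : Set ℝ} (hF' : ∀ x ∈ s, ∀ i j, HasDerivAt (F · i j) (F' x i j) x)
    (hF'' : ∀ x ∈ s, ∀ i j, HasDerivAt (F' · i j) (F'' x i j) x)
    (heq : ∀ x ∈ s, -F'' x + V x * F x = c • F x) :
    IsMatrixSolution (fun x => V x - c • 1) F F' s := by
  intro x hx i j
  have hF''eq : F'' x = (V x - c • 1) * F x := by
    rw [sub_mul, smul_one_mul, ← heq x hx]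
    abel
  exact ⟨hF' x hx i j, hF''eq ▸ hF'' x hx i j⟩

namespace IsMatrixSolution

variable {M F F' G G' : ℝ → Matrix n n 𝕜}

theorem hasDerivAt_mulVec {s : Set ℝ} (hF : IsMatrixSolution M F F' s) (v : n → 𝕜) {x : ℝ}
    (hx : x ∈ s) :
    HasDerivAt (F · *ᵥ v) (F' x *ᵥ v) x ∧ HasDerivAt (F' · *ᵥ v) (M x *ᵥ (F x *ᵥ v)) x := by
  refine ⟨_root_.hasDerivAt_mulVec (fun i j => (hF x hx i j).1) v, ?_⟩
  rw [mulVec_mulVec]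
  exact _root_.hasDerivAt_mulVec (fun i j => (hF x hx i j).2) v

theorem mulVec_eq_of_eq {a b t₀ : ℝ} (hM : ContinuousOn M (Icc a b))
    (hF : IsMatrixSolution M F F' (Icc a b)) (hG : IsMatrixSolution M G G' (Icc a b))
    (ht₀ : t₀ ∈ Icc a b) {v w : n → 𝕜} (h₀ : F t₀ *ᵥ v = G t₀ *ᵥ w)
    (h₀' : F' t₀ *ᵥ v = G' t₀ *ᵥ w) :
    ∀ t ∈ Icc a b, F t *ᵥ v = G t *ᵥ w ∧ F' t *ᵥ v = G' t *ᵥ w := by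
  obtain ⟨K, hK⟩ := exists_lipschitzWith_mulVec isCompact_Icc hM
  exact ODE_secondOrder_solution_unique_of_mem_Icc hK (fun _ ht => hF.hasDerivAt_mulVec v ht)
    (fun _ ht => hG.hasDerivAt_mulVec w ht) ht₀ h₀ h₀'

open BoundaryCondition in
theorem trace_cotrace_mulVec_of_trace_mulVec_eq_zero [DecidableEq n]
    {β γ : BoundaryCondition (Matrix n n 𝕜)} {a b s t : ℝ} (hM : ContinuousOn M (Icc a b))
    (hF : IsMatrixSolution M F F' (Icc a b)) (hG : IsMatrixSolution M G G' (Icc a b))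
    (hs : s ∈ Icc a b) (ht : t ∈ Icc a b) (hFs : γ.IsNormalized (F s) (F' s))
    (hGt : β.IsNormalized (G t) (G' t)) {v : n → 𝕜} (hv : β.trace (F t) (F' t) *ᵥ v = 0) :
    γ.trace (G s) (G' s) *ᵥ (β.cotrace (F t) (F' t) *ᵥ v) = 0 ∧
      γ.cotrace (G s) (G' s) *ᵥ (β.cotrace (F t) (F' t) *ᵥ v) = v := by
  obtain ⟨hval, hderiv⟩ := mulVec_eq_of_trace_mulVec_eq_zero hGt hv
  obtain ⟨hvalₛ, hderivₛ⟩ := mulVec_eq_of_eq hM hF hG ht hval hderiv s hs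
  obtain ⟨htrace, hcotrace⟩ := trace_mulVec_congr (β := γ) hvalₛ hderivₛ
  rw [← htrace, ← hcotrace, trace_eq_zero_of_isNormalized hFs,
    cotrace_eq_one_of_isNormalized hFs, zero_mulVec, one_mulVec]
  exact ⟨rfl, rfl⟩

end IsMatrixSolution

end MatrixODE

theorem boundary_maps_mutually_inverse_general {N : ℕ}
    (Tm Tp a b : Matrix (Fin N) (Fin N) ℂ)
    (hTm2 : Tm * Tm = Tm) (hTp2 : Tp * Tp = Tp)
    (ha : a = (1 - Tm) * a * (1 - Tm))
    (hb : b = (1 - Tp) * b * (1 - Tp))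
    (V : ℝ → Matrix (Fin N) (Fin N) ℂ)
    (hVc : ∀ i j, Continuous fun x => V x i j)
    (lam0 : ℝ)
    (Fm Fm' Fm'' Fp Fp' Fp'' : ℝ → Matrix (Fin N) (Fin N) ℂ)
    (hFm' : ∀ x ∈ Icc (0:ℝ) 1, ∀ i j, HasDerivAt (fun t => Fm t i j) (Fm' x i j) x)
    (hFm'' : ∀ x ∈ Icc (0:ℝ) 1, ∀ i j, HasDerivAt (fun t => Fm' t i j) (Fm'' x i j) x)
    (hFmeq : ∀ x ∈ Icc (0:ℝ) 1, -Fm'' x + V x * Fm x = (lam0 : ℂ) • Fm x)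
    (hFm0 : Fm 0 = 1 - Tm) (hFm'0 : Fm' 0 = Tm + a * (1 - Tm))
    (hFp' : ∀ x ∈ Icc (0:ℝ) 1, ∀ i j, HasDerivAt (fun t => Fp t i j) (Fp' x i j) x)
    (hFp'' : ∀ x ∈ Icc (0:ℝ) 1, ∀ i j, HasDerivAt (fun t => Fp' t i j) (Fp'' x i j) x)
    (hFpeq : ∀ x ∈ Icc (0:ℝ) 1, -Fp'' x + V x * Fp x = (lam0 : ℂ) • Fp x)
    (hFp1 : Fp 1 = 1 - Tp) (hFp'1 : Fp' 1 = Tp - b * (1 - Tp)) :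
    (∀ h : Fin N → ℂ, ((1 - Tp) * (Fm' 1 + b * Fm 1) - Tp * Fm 1) *ᵥ h = 0 →
      ((1 - Tm) * (Fp' 0 - a * Fp 0) - Tm * Fp 0) *ᵥ
        (((1 - Tp) * Fm 1 + Tp * Fm' 1) *ᵥ h) = 0) ∧
    (∀ h : Fin N → ℂ, ((1 - Tm) * (Fp' 0 - a * Fp 0) - Tm * Fp 0) *ᵥ h = 0 →
      ((1 - Tp) * (Fm' 1 + b * Fm 1) - Tp * Fm 1) *ᵥ
        (((1 - Tm) * Fp 0 + Tm * Fp' 0) *ᵥ h) = 0) ∧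
    (∀ h : Fin N → ℂ, ((1 - Tp) * (Fm' 1 + b * Fm 1) - Tp * Fm 1) *ᵥ h = 0 →
      ((1 - Tm) * Fp 0 + Tm * Fp' 0) *ᵥ
        (((1 - Tp) * Fm 1 + Tp * Fm' 1) *ᵥ h) = h) ∧
    (∀ h : Fin N → ℂ, ((1 - Tm) * (Fp' 0 - a * Fp 0) - Tm * Fp 0) *ᵥ h = 0 →
      ((1 - Tp) * Fm 1 + Tp * Fm' 1) *ᵥ
        (((1 - Tm) * Fp 0 + Tm * Fp' 0) *ᵥ h) = h) := by
  let βp := BoundaryCondition.ofEqCompl Tp b hTp2 hb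
  let βm := BoundaryCondition.ofEqCompl Tm (-a) hTm2 (by rw [mul_neg, neg_mul, ← ha])
  have hΓm : ∀ Y Y', (1 - Tm) * (Y' - a * Y) - Tm * Y = βm.trace Y Y' := fun Y Y' => by
    show _ = (1 - Tm) * (Y' + -a * Y) - Tm * Y
    rw [neg_mul, ← sub_eq_add_neg]
  have hM : ContinuousOn (fun x => V x - (lam0 : ℂ) • 1) (Icc 0 1) :=
    ((continuous_pi fun i => continuous_pi (hVc i)).sub continuous_const).continuousOn
  have hm := isMatrixSolution_of_neg_add_mul_eq_smul hFm' hFm'' hFmeq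
  have hp := isMatrixSolution_of_neg_add_mul_eq_smul hFp' hFp'' hFpeq
  have hm0 : βm.IsNormalized (Fm 0) (Fm' 0) := ⟨hFm0, by
    show _ = Tm - -a * (1 - Tm)
    rw [hFm'0, neg_mul, sub_neg_eq_add]⟩
  have hp1 : βp.IsNormalized (Fp 1) (Fp' 1) := ⟨hFp1, hFp'1⟩
  have h01 : (0 : ℝ) ∈ Icc 0 1 := left_mem_Icc.2 zero_le_one
  have h11 : (1 : ℝ) ∈ Icc 0 1 := right_mem_Icc.2 zero_le_one
  simp only [hΓm]
  have hfwd := fun h (hh : βp.trace (Fm 1) (Fm' 1) *ᵥ h = 0) =>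
    hm.trace_cotrace_mulVec_of_trace_mulVec_eq_zero hM hp h01 h11 hm0 hp1 hh
  have hbwd := fun h (hh : βm.trace (Fp 0) (Fp' 0) *ᵥ h = 0) =>
    hp.trace_cotrace_mulVec_of_trace_mulVec_eq_zero hM hm h11 h01 hp1 hm0 hh
  exact ⟨fun h hh => (hfwd h hh).1, fun h hh => (hbwd h hh).1, fun h hh => (hfwd h hh).2,
    fun h hh => (hbwd h hh).2⟩

/-- With `F₋, F₊` the fundamental solutions at `λ₀` normalized at `0`
and `1` respectively, `Γ₊°F₋` maps `E = Ker(Γ₊F₋)` into `E^♯ = Ker(Γ₋F₊)`, `Γ₋°F₊` maps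
`E^♯` into `E`, and these maps are mutually inverse. -/
theorem boundary_maps_mutually_inverse {N : ℕ} (hN : 1 ≤ N)
    (Tm Tp a b : Matrix (Fin N) (Fin N) ℂ)
    (hTmH : Tmᴴ = Tm) (hTm2 : Tm * Tm = Tm) (hTpH : Tpᴴ = Tp) (hTp2 : Tp * Tp = Tp)
    (haH : aᴴ = a) (ha : a = (1 - Tm) * a * (1 - Tm))
    (hbH : bᴴ = b) (hb : b = (1 - Tp) * b * (1 - Tp))
    (V : ℝ → Matrix (Fin N) (Fin N) ℂ)
    (hVc : ∀ i j, Continuous fun x => V x i j)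
    (hVh : ∀ x ∈ Icc (0:ℝ) 1, (V x)ᴴ = V x)
    (lam0 : ℝ)
    (Fm Fm' Fm'' Fp Fp' Fp'' : ℝ → Matrix (Fin N) (Fin N) ℂ)
    (hFm' : ∀ x ∈ Icc (0:ℝ) 1, ∀ i j, HasDerivAt (fun t => Fm t i j) (Fm' x i j) x)
    (hFm'' : ∀ x ∈ Icc (0:ℝ) 1, ∀ i j, HasDerivAt (fun t => Fm' t i j) (Fm'' x i j) x)
    (hFm''c : ∀ i j, ContinuousOn (fun x => Fm'' x i j) (Icc (0:ℝ) 1))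
    (hFmeq : ∀ x ∈ Icc (0:ℝ) 1, -Fm'' x + V x * Fm x = (lam0 : ℂ) • Fm x)
    (hFm0 : Fm 0 = 1 - Tm) (hFm'0 : Fm' 0 = Tm + a * (1 - Tm))
    (hFp' : ∀ x ∈ Icc (0:ℝ) 1, ∀ i j, HasDerivAt (fun t => Fp t i j) (Fp' x i j) x)
    (hFp'' : ∀ x ∈ Icc (0:ℝ) 1, ∀ i j, HasDerivAt (fun t => Fp' t i j) (Fp'' x i j) x)
    (hFp''c : ∀ i j, ContinuousOn (fun x => Fp'' x i j) (Icc (0:ℝ) 1))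
    (hFpeq : ∀ x ∈ Icc (0:ℝ) 1, -Fp'' x + V x * Fp x = (lam0 : ℂ) • Fp x)
    (hFp1 : Fp 1 = 1 - Tp) (hFp'1 : Fp' 1 = Tp - b * (1 - Tp)) :
    (∀ h : Fin N → ℂ, ((1 - Tp) * (Fm' 1 + b * Fm 1) - Tp * Fm 1) *ᵥ h = 0 →
      ((1 - Tm) * (Fp' 0 - a * Fp 0) - Tm * Fp 0) *ᵥ
        (((1 - Tp) * Fm 1 + Tp * Fm' 1) *ᵥ h) = 0) ∧
    (∀ h : Fin N → ℂ, ((1 - Tm) * (Fp' 0 - a * Fp 0) - Tm * Fp 0) *ᵥ h = 0 →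
      ((1 - Tp) * (Fm' 1 + b * Fm 1) - Tp * Fm 1) *ᵥ
        (((1 - Tm) * Fp 0 + Tm * Fp' 0) *ᵥ h) = 0) ∧
    (∀ h : Fin N → ℂ, ((1 - Tp) * (Fm' 1 + b * Fm 1) - Tp * Fm 1) *ᵥ h = 0 →
      ((1 - Tm) * Fp 0 + Tm * Fp' 0) *ᵥ
        (((1 - Tp) * Fm 1 + Tp * Fm' 1) *ᵥ h) = h) ∧
    (∀ h : Fin N → ℂ, ((1 - Tm) * (Fp' 0 - a * Fp 0) - Tm * Fp 0) *ᵥ h = 0 →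
      ((1 - Tp) * Fm 1 + Tp * Fm' 1) *ᵥ
        (((1 - Tm) * Fp 0 + Tm * Fp' 0) *ᵥ h) = h) :=
  boundary_maps_mutually_inverse_general Tm Tp a b hTm2 hTp2 ha hb V hVc lam0 Fm Fm' Fm'' Fp Fp'
    Fp'' hFm' hFm'' hFmeq hFm0 hFm'0 hFp' hFp'' hFpeq hFp1 hFp'1
end
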